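/- arXiv:2601.14064 — 6 statements merged into one kernel-verified Lean document; each statement's English description precedes it below -/
import Mathlib

section
/- Let X and Y be time-dependent vector fields on a smooth manifold M, and let (t,p) ∈ ℝ × M. Define the four-step path c₄(ε) by: c₁(ε) = Flow_X(t+ε, t, p); c₂(ε) = Flow_Y(t+2ε, t+ε, c₁(ε)); c₃(ε) = Flow_X(t+ε, t+2ε, c₂(ε)); c₄(ε) = Flow_Y(t, t+ε, c₃(ε)). Then c₄(0) = p, c₄′(0) = 0, and (1/2)·c₄″(0) = [X,Y]_(t,p) + Ẏ(t,p) − Ẋ(t,p), where the second derivative c₄″(0) is identified with a tangent vector in T_pM (which is possible since c₄′(0) = 0). -/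
/-!
STATEMENT 0: the four-step path built from the time-dependent flows of two
time-dependent vector fields `X`, `Y` on `M` (modelled on a real normed space `E`)
satisfies `c₄ 0 = p`, `c₄' 0 = 0` and `(1/2) c₄'' 0 = [X,Y]_(t,p) + Ẏ(t,p) − Ẋ(t,p)`.
-/

noncomputable section

open scoped Topology

section FourStepAux

variable {E : Type*} [NormedAddCommGroup E] [NormedSpace ℝ E]

/-- First-order jet of a time-dependent flow at the diagonal. -/
lemma flow_fderiv_diag
    (Z : ℝ → E → E)
    (F : ℝ × ℝ × E → E) (hF : ContDiff ℝ (⊤ : ℕ∞) F)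
    (h0 : ∀ u p, F (u, u, p) = p)
    (hode : ∀ s u p, HasDerivAt (fun r => F (r, u, p)) (Z s (F (s, u, p))) s)
    (u : ℝ) (p : E) (h : ℝ × ℝ × E) :
    fderiv ℝ F (u, u, p) h = (h.1 - h.2.1) • Z u p + h.2.2 := by
  have hFd : Differentiable ℝ F := hF.differentiable (by simp)
  -- ∂₁ : fderiv F (u,u,p) (1,0,0) = Z u p
  have h1 : fderiv ℝ F (u, u, p) ((1:ℝ), (0:ℝ), (0:E)) = Z u p := by
    have hcurve : HasDerivAt (fun r : ℝ => (r, u, p) : ℝ → ℝ × ℝ × E)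
        ((1:ℝ), (0:ℝ), (0:E)) u :=
      (hasDerivAt_id u).prodMk ((hasDerivAt_const u u).prodMk (hasDerivAt_const u p))
    have h₁ : HasDerivAt (fun r => F (r, u, p))
        (fderiv ℝ F (u, u, p) ((1:ℝ), (0:ℝ), (0:E))) u :=
      (hFd (u, u, p)).hasFDerivAt.comp_hasDerivAt u hcurve
    have h₂ := hode u u p
    rw [h0 u p] at h₂
    exact h₁.unique h₂
  -- diagonal : fderiv F (u,u,p) (b,b,v) = v
  have h2 : ∀ b : ℝ, ∀ v : E, fderiv ℝ F (u, u, p) (b, b, v) = v := by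
    intro b v
    set L : ℝ × E →L[ℝ] ℝ × ℝ × E :=
      (ContinuousLinearMap.fst ℝ ℝ E).prod (ContinuousLinearMap.id ℝ (ℝ × E))
    have hL : ∀ q : ℝ × E, L q = (q.1, q.1, q.2) := fun q => rfl
    have hcomp : HasFDerivAt (F ∘ L)
        ((fderiv ℝ F (u, u, p)).comp L) (u, p) :=
      HasFDerivAt.comp (u, p) ((hFd (u, u, p)).hasFDerivAt) L.hasFDerivAt
    have heq : (F ∘ L) = fun q : ℝ × E => q.2 := by
      funext q; exact h0 q.1 q.2
    rw [heq] at hcomp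
    have hsnd : HasFDerivAt (fun q : ℝ × E => q.2)
        (ContinuousLinearMap.snd ℝ ℝ E) ((u, p) : ℝ × E) := hasFDerivAt_snd
    have := hcomp.unique hsnd
    have := congrArg (fun (A : ℝ × E →L[ℝ] E) => A (b, v)) this
    simpa [hL] using this
  have hsplit : h = (h.1 - h.2.1) • ((1:ℝ), (0:ℝ), (0:E)) + (h.2.1, h.2.1, h.2.2) := by
    ext <;> simp
  calc fderiv ℝ F (u, u, p) h
      = fderiv ℝ F (u, u, p) ((h.1 - h.2.1) • ((1:ℝ), (0:ℝ), (0:E)) + (h.2.1, h.2.1, h.2.2)) := by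
        rw [← hsplit]
    _ = (h.1 - h.2.1) • Z u p + h.2.2 := by
        rw [map_add, map_smul, h1, h2]

/-- Second-order jet of a time-dependent flow at the diagonal. -/
lemma flow_sndfderiv_diag
    (Z : ℝ → E → E) (hZ : ContDiff ℝ (⊤ : ℕ∞) fun q : ℝ × E => Z q.1 q.2)
    (F : ℝ × ℝ × E → E) (hF : ContDiff ℝ (⊤ : ℕ∞) F)
    (h0 : ∀ u p, F (u, u, p) = p)
    (hode : ∀ s u p, HasDerivAt (fun r => F (r, u, p)) (Z s (F (s, u, p))) s)
    (u : ℝ) (p : E) (h k : ℝ × ℝ × E) :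
    fderiv ℝ (fderiv ℝ F) (u, u, p) h k =
      (k.1 - k.2.1) • (fderiv ℝ (fun q : ℝ × E => Z q.1 q.2) (u, p)
          (h.1, (h.1 - h.2.1) • Z u p + h.2.2))
        + (h.1 - h.2.1) • (fderiv ℝ (fun q : ℝ × E => Z q.1 q.2) (u, p) (k.2.1, k.2.2)) := by
  have hFd : Differentiable ℝ F := hF.differentiable (by simp)
  have hF1 : ContDiff ℝ (⊤ : ℕ∞) (fderiv ℝ F) := hF.fderiv_right (by simp)
  have hF1d : Differentiable ℝ (fderiv ℝ F) := hF1.differentiable (by simp)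
  have hZd : Differentiable ℝ (fun q : ℝ × E => Z q.1 q.2) := hZ.differentiable (by simp)
  set 𝒵 : ℝ × E → E := fun q => Z q.1 q.2 with h𝒵
  set D2 : (ℝ × ℝ × E) →L[ℝ] (ℝ × ℝ × E) →L[ℝ] E := fderiv ℝ (fderiv ℝ F) (u, u, p) with hD2
  -- (i) : ∀ q, fderiv F q (1,0,0) = 𝒵 (q.1, F q)
  have hi : ∀ q : ℝ × ℝ × E, fderiv ℝ F q ((1:ℝ), (0:ℝ), (0:E)) = 𝒵 (q.1, F q) := by
    intro q
    have hcurve : HasDerivAt (fun r : ℝ => (r, q.2.1, q.2.2) : ℝ → ℝ × ℝ × E)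
        ((1:ℝ), (0:ℝ), (0:E)) q.1 :=
      (hasDerivAt_id q.1).prodMk ((hasDerivAt_const q.1 q.2.1).prodMk (hasDerivAt_const q.1 q.2.2))
    have h₁ : HasDerivAt (fun r => F (r, q.2.1, q.2.2))
        (fderiv ℝ F q ((1:ℝ), (0:ℝ), (0:E))) q.1 := by
      have := (hFd (q.1, q.2.1, q.2.2)).hasFDerivAt.comp_hasDerivAt q.1 hcurve
      simpa [Function.comp_def] using this
    have h₂ := hode q.1 q.2.1 q.2.2
    exact h₁.unique h₂
  -- (ii) : D2 h e₁ = D𝒵 (u,p) (h.1, fderiv F q₀ h)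
  have hii : ∀ h : ℝ × ℝ × E, D2 h ((1:ℝ), (0:ℝ), (0:E)) =
      fderiv ℝ 𝒵 (u, p) (h.1, fderiv ℝ F (u, u, p) h) := by
    intro h
    have hfun : (fun q : ℝ × ℝ × E => fderiv ℝ F q ((1:ℝ), (0:ℝ), (0:E)))
        = fun q : ℝ × ℝ × E => 𝒵 (q.1, F q) := funext hi
    -- LHS HasFDerivAt
    have hlhs : HasFDerivAt (fun q : ℝ × ℝ × E => fderiv ℝ F q ((1:ℝ), (0:ℝ), (0:E)))
        ((ContinuousLinearMap.apply ℝ E ((1:ℝ), (0:ℝ), (0:E))).comp D2) (u, u, p) :=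
      ((ContinuousLinearMap.apply ℝ E ((1:ℝ), (0:ℝ), (0:E))).hasFDerivAt).comp (u, u, p)
        (hF1d (u, u, p)).hasFDerivAt
    -- RHS HasFDerivAt
    have hinner : HasFDerivAt (fun q : ℝ × ℝ × E => (q.1, F q))
        ((ContinuousLinearMap.fst ℝ ℝ (ℝ × E)).prod (fderiv ℝ F (u, u, p))) (u, u, p) :=
      hasFDerivAt_fst.prodMk (hFd (u, u, p)).hasFDerivAt
    have hrhs : HasFDerivAt (fun q : ℝ × ℝ × E => 𝒵 (q.1, F q))
        ((fderiv ℝ 𝒵 (u, p)).comp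
          ((ContinuousLinearMap.fst ℝ ℝ (ℝ × E)).prod (fderiv ℝ F (u, u, p)))) (u, u, p) := by
      have hZp : HasFDerivAt 𝒵 (fderiv ℝ 𝒵 (u, p))
          ((((u, u, p) : ℝ × ℝ × E)).1, F (u, u, p)) := by
        rw [h0 u p]; exact (hZd (u, p)).hasFDerivAt
      exact hZp.comp (u, u, p) hinner
    rw [hfun] at hlhs
    have := hlhs.unique hrhs
    have := congrArg (fun (A : (ℝ × ℝ × E) →L[ℝ] E) => A h) this
    simpa using this
  -- (iii) : D2 (diag) (diag) = 0
  have hiii : ∀ (b : ℝ) (v : E) (b' : ℝ) (v' : E), D2 (b, b, v) (b', b', v') = 0 := by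
    intro b v b' v'
    set L : ℝ × E →L[ℝ] ℝ × ℝ × E :=
      (ContinuousLinearMap.fst ℝ ℝ E).prod (ContinuousLinearMap.id ℝ (ℝ × E)) with hLdef
    have hw : ∀ q : ℝ × E, fderiv ℝ F (L q) (b', b', v') = v' := by
      intro q
      have hcomp : HasFDerivAt (F ∘ L) ((fderiv ℝ F (L q)).comp L) q :=
        HasFDerivAt.comp q ((hFd (L q)).hasFDerivAt) L.hasFDerivAt
      have heq : (F ∘ L) = fun q : ℝ × E => q.2 := by
        funext q; exact h0 q.1 q.2
      rw [heq] at hcomp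
      have := hcomp.unique (hasFDerivAt_snd (𝕜 := ℝ) (p := q))
      have := congrArg (fun (A : ℝ × E →L[ℝ] E) => A (b', v')) this
      simpa [hLdef] using this
    have hwfun : (fun q : ℝ × E => fderiv ℝ F (L q) ((b', b', v') : ℝ × ℝ × E))
        = fun _ : ℝ × E => v' := funext hw
    have hlhs : HasFDerivAt (fun q : ℝ × E => fderiv ℝ F (L q) ((b', b', v') : ℝ × ℝ × E))
        ((ContinuousLinearMap.apply ℝ E ((b', b', v') : ℝ × ℝ × E)).comp (D2.comp L)) (u, p) := by
      have h₁ : HasFDerivAt (fderiv ℝ F ∘ L) (D2.comp L) (u, p) :=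
        HasFDerivAt.comp (u, p) (hF1d (L (u, p))).hasFDerivAt L.hasFDerivAt
      exact ((ContinuousLinearMap.apply ℝ E ((b', b', v') : ℝ × ℝ × E)).hasFDerivAt).comp (u, p) h₁
    rw [hwfun] at hlhs
    have := hlhs.unique (hasFDerivAt_const v' (u, p))
    have := congrArg (fun (A : ℝ × E →L[ℝ] E) => A (b, v)) this
    simpa [hLdef] using this
  -- symmetry
  have hsymm : ∀ v w : ℝ × ℝ × E, D2 v w = D2 w v := by
    intro v w
    exact second_derivative_symmetric (fun y => (hFd y).hasFDerivAt)
      (hF1d (u, u, p)).hasFDerivAt v w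
  -- assemble
  have hsplit : ∀ m : ℝ × ℝ × E,
      m = (m.1 - m.2.1) • ((1:ℝ), (0:ℝ), (0:E)) + (m.2.1, m.2.1, m.2.2) := by
    intro m; ext <;> simp
  have hdk : D2 (k.2.1, k.2.1, k.2.2) ((1:ℝ), (0:ℝ), (0:E))
      = fderiv ℝ 𝒵 (u, p) (k.2.1, k.2.2) := by
    rw [hii]
    congr 1
    rw [flow_fderiv_diag Z F hF h0 hode]
    simp
  have hhe : D2 h ((1:ℝ), (0:ℝ), (0:E))
      = fderiv ℝ 𝒵 (u, p) (h.1, (h.1 - h.2.1) • Z u p + h.2.2) := by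
    rw [hii]
    congr 1
    rw [flow_fderiv_diag Z F hF h0 hode]
  calc D2 h k
      = D2 h ((k.1 - k.2.1) • ((1:ℝ), (0:ℝ), (0:E)) + (k.2.1, k.2.1, k.2.2)) := by
        rw [← hsplit k]
    _ = (k.1 - k.2.1) • D2 h ((1:ℝ), (0:ℝ), (0:E)) + D2 (k.2.1, k.2.1, k.2.2) h := by
        rw [map_add, map_smul]
        simp [hsymm h (k.2.1, k.2.1, k.2.2)]
    _ = (k.1 - k.2.1) • D2 h ((1:ℝ), (0:ℝ), (0:E))
        + D2 (k.2.1, k.2.1, k.2.2) ((h.1 - h.2.1) • ((1:ℝ), (0:ℝ), (0:E)) + (h.2.1, h.2.1, h.2.2)) := by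
        rw [← hsplit h]
    _ = (k.1 - k.2.1) • (fderiv ℝ 𝒵 (u, p) (h.1, (h.1 - h.2.1) • Z u p + h.2.2))
        + (h.1 - h.2.1) • (fderiv ℝ 𝒵 (u, p) (k.2.1, k.2.2)) := by
        rw [map_add, map_smul, hiii, hdk, hhe]
        simp

lemma step_hasDeriv (F : ℝ × ℝ × E → E) (hF : ContDiff ℝ (⊤ : ℕ∞) F)
    (a b : ℝ → ℝ) (γ : ℝ → E) (a' b' : ℝ) (d : E) (ε : ℝ)
    (ha : HasDerivAt a a' ε) (hb : HasDerivAt b b' ε) (hγ : HasDerivAt γ d ε) :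
    HasDerivAt (fun ε => F (a ε, b ε, γ ε))
      (fderiv ℝ F (a ε, b ε, γ ε) (a', b', d)) ε :=
  ((hF.differentiable (by simp)) _).hasFDerivAt.comp_hasDerivAt ε (ha.prodMk (hb.prodMk hγ))

lemma step_hasDeriv2 (F : ℝ × ℝ × E → E) (hF : ContDiff ℝ (⊤ : ℕ∞) F)
    (a b : ℝ → ℝ) (γ w : ℝ → E) (a' b' : ℝ) (d w' : E) (ε : ℝ)
    (ha : HasDerivAt a a' ε) (hb : HasDerivAt b b' ε) (hγ : HasDerivAt γ d ε)
    (hw : HasDerivAt w w' ε) :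
    HasDerivAt (fun ε => fderiv ℝ F (a ε, b ε, γ ε) (a', b', w ε))
      (fderiv ℝ (fderiv ℝ F) (a ε, b ε, γ ε) (a', b', d) (a', b', w ε)
        + fderiv ℝ F (a ε, b ε, γ ε) ((0:ℝ), (0:ℝ), w')) ε := by
  have hc : HasDerivAt (fun ε => fderiv ℝ F (a ε, b ε, γ ε))
      (fderiv ℝ (fderiv ℝ F) (a ε, b ε, γ ε) (a', b', d)) ε :=
    (((hF.fderiv_right (m := (⊤ : ℕ∞)) (by simp)).differentiable (by simp)) _).hasFDerivAt.comp_hasDerivAt ε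
      (ha.prodMk (hb.prodMk hγ))
  have hu : HasDerivAt (fun ε => ((a' : ℝ), (b' : ℝ), w ε)) ((0:ℝ), (0:ℝ), w') ε :=
    (hasDerivAt_const ε a').prodMk ((hasDerivAt_const ε b').prodMk hw)
  exact hc.clm_apply hu

lemma vf_space_fderiv (Z : ℝ → E → E) (hZ : ContDiff ℝ (⊤ : ℕ∞) fun q : ℝ × E => Z q.1 q.2)
    (t : ℝ) (p v : E) :
    fderiv ℝ (Z t) p v = fderiv ℝ (fun q : ℝ × E => Z q.1 q.2) (t, p) (0, v) := by
  have hin : HasFDerivAt (fun x : E => ((t, x) : ℝ × E))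
      (((0 : E →L[ℝ] ℝ)).prod (ContinuousLinearMap.id ℝ E)) p :=
    (hasFDerivAt_const t p).prodMk (hasFDerivAt_id p)
  have h1 : HasFDerivAt (Z t)
      ((fderiv ℝ (fun q : ℝ × E => Z q.1 q.2) (t, p)).comp
        (((0 : E →L[ℝ] ℝ)).prod (ContinuousLinearMap.id ℝ E))) p :=
    ((hZ.differentiable (by simp) (t, p)).hasFDerivAt).comp p hin
  rw [h1.fderiv]
  simp

lemma vf_time_deriv (Z : ℝ → E → E) (hZ : ContDiff ℝ (⊤ : ℕ∞) fun q : ℝ × E => Z q.1 q.2)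
    (t : ℝ) (p : E) :
    deriv (fun s => Z s p) t = fderiv ℝ (fun q : ℝ × E => Z q.1 q.2) (t, p) (1, 0) := by
  have hcurve : HasDerivAt (fun s : ℝ => ((s, p) : ℝ × E)) ((1:ℝ), (0:E)) t :=
    (hasDerivAt_id t).prodMk (hasDerivAt_const t p)
  have h1 : HasDerivAt (fun s => Z s p)
      (fderiv ℝ (fun q : ℝ × E => Z q.1 q.2) (t, p) ((1:ℝ), (0:E))) t :=
    by have := ((hZ.differentiable (by simp) (t, p)).hasFDerivAt).comp_hasDerivAt t hcurve; exact this
  exact h1.deriv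

lemma clm_split (A : ℝ × E →L[ℝ] E) (a : ℝ) (v : E) :
    A (a, v) = a • A (1, 0) + A (0, v) := by
  rw [← map_smul, ← map_add]
  congr 1
  ext <;> simp

lemma clm_add_snd (A : ℝ × E →L[ℝ] E) (y x : E) :
    A (0, y + x) = A (0, y) + A (0, x) := by
  rw [← map_add]
  congr 1
  ext <;> simp


end FourStepAux

theorem four_step_path_bracket
    {E : Type*} [NormedAddCommGroup E] [NormedSpace ℝ E]
    -- time-dependent vector fields
    (X Y : ℝ → E → E)
    (hX : ContDiff ℝ (⊤ : ℕ∞) fun q : ℝ × E => X q.1 q.2)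
    (hY : ContDiff ℝ (⊤ : ℕ∞) fun q : ℝ × E => Y q.1 q.2)
    -- their time-dependent flows: `Φ s t p` is the value at time `s` of the
    -- integral curve of `X` passing through `p` at time `t`
    (Φ Ψ : ℝ → ℝ → E → E)
    (hΦs : ContDiff ℝ (⊤ : ℕ∞) fun q : ℝ × ℝ × E => Φ q.1 q.2.1 q.2.2)
    (hΨs : ContDiff ℝ (⊤ : ℕ∞) fun q : ℝ × ℝ × E => Ψ q.1 q.2.1 q.2.2)
    (hΦ0 : ∀ t p, Φ t t p = p)
    (hΨ0 : ∀ t p, Ψ t t p = p)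
    (hΦode : ∀ s t p, HasDerivAt (fun u => Φ u t p) (X s (Φ s t p)) s)
    (hΨode : ∀ s t p, HasDerivAt (fun u => Ψ u t p) (Y s (Ψ s t p)) s)
    (t : ℝ) (p : E)
    -- the four-step path
    (c₁ c₂ c₃ c₄ : ℝ → E)
    (hc₁ : ∀ ε, c₁ ε = Φ (t + ε) t p)
    (hc₂ : ∀ ε, c₂ ε = Ψ (t + 2 * ε) (t + ε) (c₁ ε))
    (hc₃ : ∀ ε, c₃ ε = Φ (t + ε) (t + 2 * ε) (c₂ ε))
    (hc₄ : ∀ ε, c₄ ε = Ψ t (t + ε) (c₃ ε)) :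
    c₄ 0 = p ∧ deriv c₄ 0 = 0 ∧
      (1 / 2 : ℝ) • deriv (deriv c₄) 0 =
        (fderiv ℝ (Y t) p (X t p) - fderiv ℝ (X t) p (Y t p))
          + deriv (fun s => Y s p) t - deriv (fun s => X s p) t := by
  set f : ℝ × ℝ × E → E := fun q => Φ q.1 q.2.1 q.2.2 with hfdef
  set g : ℝ × ℝ × E → E := fun q => Ψ q.1 q.2.1 q.2.2 with hgdef
  have hf0 : ∀ u p, f (u, u, p) = p := fun u p => hΦ0 u p
  have hg0 : ∀ u p, g (u, u, p) = p := fun u p => hΨ0 u p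
  have hfode : ∀ s u p, HasDerivAt (fun r => f (r, u, p)) (X s (f (s, u, p))) s :=
    fun s u p => hΦode s u p
  have hgode : ∀ s u p, HasDerivAt (fun r => g (r, u, p)) (Y s (g (s, u, p))) s :=
    fun s u p => hΨode s u p
  have jet1f := flow_fderiv_diag X f hΦs hf0 hfode
  have jet1g := flow_fderiv_diag Y g hΨs hg0 hgode
  have jet2f := flow_sndfderiv_diag X hX f hΦs hf0 hfode
  have jet2g := flow_sndfderiv_diag Y hY g hΨs hg0 hgode
  -- point values at 0
  have hc₁0 : c₁ 0 = p := by rw [hc₁]; norm_num [hΦ0]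
  have hc₂0 : c₂ 0 = p := by rw [hc₂, hc₁0]; norm_num [hΨ0]
  have hc₃0 : c₃ 0 = p := by rw [hc₃, hc₂0]; norm_num [hΦ0]
  have hc₄0 : c₄ 0 = p := by rw [hc₄, hc₃0]; norm_num [hΨ0]
  -- the derivative functions
  set d₁ : ℝ → E := fun ε => fderiv ℝ f (t + ε, t, p) ((1:ℝ), (0:ℝ), (0:E)) with hd₁def
  set d₂ : ℝ → E := fun ε => fderiv ℝ g (t + 2 * ε, t + ε, c₁ ε) ((2:ℝ), (1:ℝ), d₁ ε) with hd₂def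
  set d₃ : ℝ → E := fun ε => fderiv ℝ f (t + ε, t + 2 * ε, c₂ ε) ((1:ℝ), (2:ℝ), d₂ ε) with hd₃def
  set d₄ : ℝ → E := fun ε => fderiv ℝ g (t, t + ε, c₃ ε) ((0:ℝ), (1:ℝ), d₃ ε) with hd₄def
  -- basic scalar derivatives
  have hta : ∀ ε : ℝ, HasDerivAt (fun ε : ℝ => t + ε) 1 ε := fun ε => by
    simpa using (hasDerivAt_id ε).const_add t
  have htb : ∀ ε : ℝ, HasDerivAt (fun ε : ℝ => t + 2 * ε) 2 ε := fun ε => by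
    simpa using ((hasDerivAt_id ε).const_mul (2:ℝ)).const_add t
  have htc : ∀ ε : ℝ, HasDerivAt (fun _ : ℝ => t) 0 ε := fun ε => hasDerivAt_const ε t
  -- HasDerivAt for the four curves
  have hd₁ : ∀ ε, HasDerivAt c₁ (d₁ ε) ε := by
    intro ε
    have hcc : c₁ = fun ε => f (t + ε, t, p) := funext fun ε => hc₁ ε
    rw [hcc]
    exact step_hasDeriv f hΦs _ _ _ 1 0 0 ε (hta ε) (htc ε) (hasDerivAt_const ε p)
  have hd₂ : ∀ ε, HasDerivAt c₂ (d₂ ε) ε := by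
    intro ε
    have hcc : c₂ = fun ε => g (t + 2 * ε, t + ε, c₁ ε) := funext fun ε => hc₂ ε
    rw [hcc]
    exact step_hasDeriv g hΨs _ _ _ 2 1 (d₁ ε) ε (htb ε) (hta ε) (hd₁ ε)
  have hd₃ : ∀ ε, HasDerivAt c₃ (d₃ ε) ε := by
    intro ε
    have hcc : c₃ = fun ε => f (t + ε, t + 2 * ε, c₂ ε) := funext fun ε => hc₃ ε
    rw [hcc]
    exact step_hasDeriv f hΦs _ _ _ 1 2 (d₂ ε) ε (hta ε) (htb ε) (hd₂ ε)
  have hd₄ : ∀ ε, HasDerivAt c₄ (d₄ ε) ε := by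
    intro ε
    have hcc : c₄ = fun ε => g (t, t + ε, c₃ ε) := funext fun ε => hc₄ ε
    rw [hcc]
    exact step_hasDeriv g hΨs _ _ _ 0 1 (d₃ ε) ε (htc ε) (hta ε) (hd₃ ε)
  have hderivc₄ : deriv c₄ = d₄ := funext fun ε => (hd₄ ε).deriv
  -- values of the derivative functions at 0
  have hv₁ : d₁ 0 = X t p := by
    rw [hd₁def]
    norm_num
    rw [jet1f]
    norm_num
  have hv₂ : d₂ 0 = Y t p + X t p := by
    rw [hd₂def]
    norm_num [hc₁0, hv₁]
    rw [jet1g]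
    norm_num
  have hv₃ : d₃ 0 = Y t p := by
    rw [hd₃def]
    norm_num [hc₂0, hv₂]
    rw [jet1f]
    norm_num
  have hv₄ : d₄ 0 = 0 := by
    rw [hd₄def]
    norm_num [hc₃0, hv₃]
    rw [jet1g]
    norm_num
  -- zero helper
  have hzf : ∀ q : ℝ × ℝ × E, fderiv ℝ f q ((0:ℝ), (0:ℝ), (0:E)) = 0 := fun q => map_zero _
  have hzg : ∀ q : ℝ × ℝ × E, fderiv ℝ g q ((0:ℝ), (0:ℝ), (0:E)) = 0 := fun q => map_zero _
  -- second derivatives of the dᵢ at 0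
  have hD₁ : HasDerivAt d₁
      (fderiv ℝ (fderiv ℝ f) (t, t, p) ((1:ℝ), (0:ℝ), (0:E)) ((1:ℝ), (0:ℝ), (0:E))) 0 := by
    have h := step_hasDeriv2 f hΦs (fun ε => t + ε) (fun _ => t) (fun _ => p)
      (fun _ => (0:E)) 1 0 0 0 0 (hta 0) (htc 0) (hasDerivAt_const 0 p)
      (hasDerivAt_const 0 (0:E))
    simpa [hzf] using h
  have hD₂ : HasDerivAt d₂
      (fderiv ℝ (fderiv ℝ g) (t, t, p) ((2:ℝ), (1:ℝ), X t p) ((2:ℝ), (1:ℝ), X t p)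
        + fderiv ℝ (fderiv ℝ f) (t, t, p) ((1:ℝ), (0:ℝ), (0:E)) ((1:ℝ), (0:ℝ), (0:E))) 0 := by
    have h := step_hasDeriv2 g hΨs (fun ε => t + 2 * ε) (fun ε => t + ε) c₁ d₁ 2 1 (d₁ 0)
      (fderiv ℝ (fderiv ℝ f) (t, t, p) ((1:ℝ), (0:ℝ), (0:E)) ((1:ℝ), (0:ℝ), (0:E))) 0
      (htb 0) (hta 0) (hd₁ 0) hD₁
    norm_num [hc₁0, hv₁] at h
    rw [jet1g] at h
    simpa using h
  have hD₃ : HasDerivAt d₃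
      (fderiv ℝ (fderiv ℝ f) (t, t, p) ((1:ℝ), (2:ℝ), Y t p + X t p) ((1:ℝ), (2:ℝ), Y t p + X t p)
        + (fderiv ℝ (fderiv ℝ g) (t, t, p) ((2:ℝ), (1:ℝ), X t p) ((2:ℝ), (1:ℝ), X t p)
        + fderiv ℝ (fderiv ℝ f) (t, t, p) ((1:ℝ), (0:ℝ), (0:E)) ((1:ℝ), (0:ℝ), (0:E)))) 0 := by
    have h := step_hasDeriv2 f hΦs (fun ε => t + ε) (fun ε => t + 2 * ε) c₂ d₂ 1 2 (d₂ 0)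
      (fderiv ℝ (fderiv ℝ g) (t, t, p) ((2:ℝ), (1:ℝ), X t p) ((2:ℝ), (1:ℝ), X t p)
        + fderiv ℝ (fderiv ℝ f) (t, t, p) ((1:ℝ), (0:ℝ), (0:E)) ((1:ℝ), (0:ℝ), (0:E))) 0
      (hta 0) (htb 0) (hd₂ 0) hD₂
    norm_num [hc₂0, hv₂] at h
    rw [jet1f] at h
    simpa using h
  have hD₄ : HasDerivAt d₄
      (fderiv ℝ (fderiv ℝ g) (t, t, p) ((0:ℝ), (1:ℝ), Y t p) ((0:ℝ), (1:ℝ), Y t p)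
        + (fderiv ℝ (fderiv ℝ f) (t, t, p) ((1:ℝ), (2:ℝ), Y t p + X t p) ((1:ℝ), (2:ℝ), Y t p + X t p)
        + (fderiv ℝ (fderiv ℝ g) (t, t, p) ((2:ℝ), (1:ℝ), X t p) ((2:ℝ), (1:ℝ), X t p)
        + fderiv ℝ (fderiv ℝ f) (t, t, p) ((1:ℝ), (0:ℝ), (0:E)) ((1:ℝ), (0:ℝ), (0:E))))) 0 := by
    have h := step_hasDeriv2 g hΨs (fun _ => t) (fun ε => t + ε) c₃ d₃ 0 1 (d₃ 0)
      (fderiv ℝ (fderiv ℝ f) (t, t, p) ((1:ℝ), (2:ℝ), Y t p + X t p) ((1:ℝ), (2:ℝ), Y t p + X t p)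
        + (fderiv ℝ (fderiv ℝ g) (t, t, p) ((2:ℝ), (1:ℝ), X t p) ((2:ℝ), (1:ℝ), X t p)
        + fderiv ℝ (fderiv ℝ f) (t, t, p) ((1:ℝ), (0:ℝ), (0:E)) ((1:ℝ), (0:ℝ), (0:E)))) 0
      (htc 0) (hta 0) (hd₃ 0) hD₃
    norm_num [hc₃0, hv₃] at h
    rw [jet1g] at h
    simpa using h
  refine ⟨hc₄0, by rw [hderivc₄, hv₄], ?_⟩
  have hsnd : deriv (deriv c₄) 0 =
      fderiv ℝ (fderiv ℝ g) (t, t, p) ((0:ℝ), (1:ℝ), Y t p) ((0:ℝ), (1:ℝ), Y t p)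
        + (fderiv ℝ (fderiv ℝ f) (t, t, p) ((1:ℝ), (2:ℝ), Y t p + X t p) ((1:ℝ), (2:ℝ), Y t p + X t p)
        + (fderiv ℝ (fderiv ℝ g) (t, t, p) ((2:ℝ), (1:ℝ), X t p) ((2:ℝ), (1:ℝ), X t p)
        + fderiv ℝ (fderiv ℝ f) (t, t, p) ((1:ℝ), (0:ℝ), (0:E)) ((1:ℝ), (0:ℝ), (0:E)))) := by
    rw [hderivc₄]
    exact hD₄.deriv
  rw [hsnd, jet2f, jet2g, jet2f, jet2g]
  norm_num
  rw [vf_space_fderiv Y hY t p (X t p), vf_space_fderiv X hX t p (Y t p),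
    vf_time_deriv Y hY t p, vf_time_deriv X hX t p,
    clm_split (fderiv ℝ (fun q : ℝ × E => Y q.1 q.2) (t, p)) 1 (Y t p),
    clm_split (fderiv ℝ (fun q : ℝ × E => X q.1 q.2) (t, p)) 1 (Y t p),
    clm_split (fderiv ℝ (fun q : ℝ × E => X q.1 q.2) (t, p)) 2 (Y t p + X t p),
    clm_split (fderiv ℝ (fun q : ℝ × E => Y q.1 q.2) (t, p)) 2 (Y t p + X t p),
    clm_split (fderiv ℝ (fun q : ℝ × E => Y q.1 q.2) (t, p)) 1 (X t p),
    clm_split (fderiv ℝ (fun q : ℝ × E => X q.1 q.2) (t, p)) 1 (X t p),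
    clm_add_snd (fderiv ℝ (fun q : ℝ × E => X q.1 q.2) (t, p)) (Y t p) (X t p),
    clm_add_snd (fderiv ℝ (fun q : ℝ × E => Y q.1 q.2) (t, p)) (Y t p) (X t p)]
  simp only [Prod.mk_zero_zero, map_zero]
  module
end
end

section
/- Let (g_t) be a time-dependent Riemannian metric on a smooth manifold M, and let γ : [a,b] → M be a smooth path. Then γ is a critical path of the energy functional E[γ] = ∫_a^b (1/2) g_t(γ′(t), γ′(t)) dt (with fixed endpoints) if and only if γ satisfies ∇_t γ′ + G⁻¹·Ġ·γ′ = 0, where ∇_t is the covariant derivative along γ with respect to the time-dependent family of Levi-Civita connections of g_t, G_t : TM → T*M is the musical isomorphism v ↦ g_t(v,·), and Ġ its time derivative. In coordinates, this equation reads γ̈^k + Γ^k_{ij} γ̇^i γ̇^j + g^{kℓ} (∂g_{ℓi}/∂t) γ̇^i = 0, where Γ^k_{ij} are the Christoffel symbols of the Levi-Civita connection of g_t evaluated at (t, γ(t)). -/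
open scoped Topology
open intervalIntegral

/-- continuous nonneg function with zero integral vanishes on the interval -/
lemma cont_nonneg_int_zero {a b : ℝ} (hab : a < b) {f : ℝ → ℝ} (hf : Continuous f)
    (hnn : ∀ u, 0 ≤ f u) (hz : (∫ u in a..b, f u) = 0) : ∀ t ∈ Set.Icc a b, f t = 0 := by
  intro t ht
  by_contra hne
  have hpos : 0 < f t := lt_of_le_of_ne (hnn t) (Ne.symm hne)
  have hev : ∀ᶠ y in 𝓝 t, f t / 2 < f y :=
    (hf.tendsto t).eventually (eventually_gt_nhds (by linarith))
  obtain ⟨δ, hδ, hball⟩ := Metric.eventually_nhds_iff_ball.mp hev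
  set c := max a (t - δ/2)
  set d := min b (t + δ/2)
  have hac : a ≤ c := le_max_left _ _
  have hdb : d ≤ b := min_le_left _ _
  have hcd : c < d := by
    apply max_lt <;> apply lt_min
    · exact hab
    · have := ht.1; linarith
    · have := ht.2; linarith
    · linarith
  have hposcd : ∀ x ∈ Set.Ioo c d, 0 < f x := by
    intro x hx
    have h1 : x ∈ Metric.ball t δ := by
      rw [Metric.mem_ball, Real.dist_eq, abs_lt]
      have h2 : t - δ/2 ≤ c := le_max_right _ _
      have h3 : d ≤ t + δ/2 := min_le_right _ _
      constructor <;> [linarith [hx.1]; linarith [hx.2]]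
    have := hball x h1
    linarith
  have hint : ∀ p q : ℝ, IntervalIntegrable f MeasureTheory.volume p q :=
    fun p q => hf.intervalIntegrable p q
  have h1 : (∫ u in a..b, f u) = (∫ u in a..c, f u) + (∫ u in c..d, f u) + (∫ u in d..b, f u) := by
    rw [integral_add_adjacent_intervals (hint a c) (hint c d),
      integral_add_adjacent_intervals (hint a d) (hint d b)]
  have h2 : 0 ≤ ∫ u in a..c, f u := intervalIntegral.integral_nonneg hac fun u _ => hnn u
  have h3 : 0 ≤ ∫ u in d..b, f u := intervalIntegral.integral_nonneg hdb fun u _ => hnn u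
  have h4 : 0 < ∫ u in c..d, f u := intervalIntegral_pos_of_pos_on (hint c d) hposcd hcd
  rw [hz] at h1
  linarith

/-- fundamental lemma: continuous `f` orthogonal to all polynomials on `[a,b]` vanishes there -/
lemma cont_orth_poly_zero {a b : ℝ} (hab : a < b) {f : ℝ → ℝ} (hf : Continuous f)
    (h : ∀ p : Polynomial ℝ, (∫ u in a..b, f u * p.eval u) = 0) :
    ∀ t ∈ Set.Icc a b, f t = 0 := by
  have hsq : (∫ u in a..b, f u * f u) = 0 := by
    by_contra hne
    have hnn : 0 ≤ ∫ u in a..b, f u * f u :=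
      intervalIntegral.integral_nonneg hab.le fun u _ => mul_self_nonneg _
    have hpos : 0 < ∫ u in a..b, f u * f u := lt_of_le_of_ne hnn (Ne.symm hne)
    set I := ∫ u in a..b, f u * f u with hI
    clear_value I
    obtain ⟨M, hM⟩ := (isCompact_Icc (a := a) (b := b)).exists_bound_of_continuousOn
      hf.continuousOn
    have hM0 : 0 ≤ M := le_trans (norm_nonneg _) (hM a (by constructor <;> linarith))
    have hM1 : (0:ℝ) < M + 1 := by linarith
    have hba : 0 < b - a := by linarith
    obtain ⟨p, hp⟩ := exists_polynomial_near_of_continuousOn a b f hf.continuousOn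
      (I / ((b - a) * (M + 1))) (div_pos hpos (mul_pos hba hM1))
    have hkey : I = ∫ u in a..b, f u * (f u - p.eval u) := by
      have := h p
      rw [hI, ← sub_zero (∫ u in a..b, f u * f u), ← this, ← intervalIntegral.integral_sub (f := fun u => f u * f u) (g := fun u => f u * p.eval u)
        ((hf.mul hf).intervalIntegrable a b)
        ((hf.mul p.continuous).intervalIntegrable a b)]
      congr 1; funext u; ring
    have hb1 : ∀ u ∈ Set.Icc a b, f u * (f u - p.eval u) ≤ M * (I / ((b - a) * (M + 1))) := by
      intro u hu
      have h6 : |f u| ≤ M := by have := hM u hu; rwa [Real.norm_eq_abs] at this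
      have h7 : |f u - p.eval u| ≤ I / ((b - a) * (M + 1)) := by
        rw [abs_sub_comm]; exact (hp u hu).le
      calc f u * (f u - p.eval u) ≤ |f u * (f u - p.eval u)| := le_abs_self _
        _ = |f u| * |f u - p.eval u| := abs_mul _ _
        _ ≤ M * (I / ((b - a) * (M + 1))) := mul_le_mul h6 h7 (abs_nonneg _) hM0
    have h5 : I ≤ (b - a) * (M * (I / ((b - a) * (M + 1)))) :=
      calc I = ∫ u in a..b, f u * (f u - p.eval u) := hkey
        _ ≤ ∫ _u in a..b, M * (I / ((b - a) * (M + 1))) :=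
            intervalIntegral.integral_mono_on hab.le
              ((hf.mul (hf.sub p.continuous)).intervalIntegrable a b)
              intervalIntegrable_const hb1
        _ = (b - a) * (M * (I / ((b - a) * (M + 1)))) := by
            rw [intervalIntegral.integral_const, smul_eq_mul]
    have h8 : (b - a) * (M * (I / ((b - a) * (M + 1)))) < I := by
      have h9 : (b - a) * (M * (I / ((b - a) * (M + 1))))
          = I * ((b - a) * M) / ((b - a) * (M + 1)) := by ring
      rw [h9, div_lt_iff₀ (mul_pos hba hM1)]
      nlinarith
    linarith
  intro t ht
  have := cont_nonneg_int_zero hab (hf.mul hf) (fun u => mul_self_nonneg _) hsq t ht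
  exact mul_self_eq_zero.mp this

open scoped ContDiff

noncomputable section

set_option maxHeartbeats 2000000 in
theorem energy_critical_iff_td_geodesic
    {E : Type*} [NormedAddCommGroup E] [NormedSpace ℝ E]
    (g : ℝ → E → E →L[ℝ] E →L[ℝ] ℝ)
    (hg : ContDiff ℝ (⊤ : ℕ∞) fun q : ℝ × E => g q.1 q.2)
    (hgsymm : ∀ t x u v, g t x u v = g t x v u)
    (hgpos : ∀ t x v, v ≠ 0 → 0 < g t x v v)
    -- Christoffel operator of the Levi-Civita connection of `g_t` (Koszul formula)
    (Γ : ℝ → E → E →L[ℝ] E →L[ℝ] E)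
    (hΓ : ∀ t x u v w,
      2 * g t x (Γ t x u v) w
        = fderiv ℝ (g t) x u v w + fderiv ℝ (g t) x v u w - fderiv ℝ (g t) x w u v)
    -- inverse musical isomorphism `G⁻¹`
    (Ginv : ℝ → E → (E →L[ℝ] ℝ) →L[ℝ] E)
    (hGinv : ∀ t x φ w, g t x (Ginv t x φ) w = φ w)
    (a b : ℝ) (hab : a < b)
    (γ : ℝ → E) (hγ : ContDiff ℝ (⊤ : ℕ∞) γ) :
    -- critical path of the energy functional, for variations with fixed endpoints …
    (∀ V : ℝ → E, ContDiff ℝ (⊤ : ℕ∞) V → V a = 0 → V b = 0 →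
        deriv (fun s : ℝ =>
          ∫ u in a..b, (1 / 2 : ℝ) * g u (γ u + s • V u)
            (deriv (fun r => γ r + s • V r) u) (deriv (fun r => γ r + s • V r) u)) 0
          = 0)
    ↔
    -- … iff `∇_t γ' + G⁻¹·Ġ·γ' = 0` on `[a,b]`
    (∀ t ∈ Set.Icc a b,
        deriv (deriv γ) t + Γ t (γ t) (deriv γ t) (deriv γ t)
          + Ginv t (γ t) (deriv (fun s => g s (γ t) (deriv γ t)) t) = 0) := by
  have h1le : (∞ : WithTop ℕ∞) ≠ 0 := by simp
  have hγ2 : ContDiff ℝ ∞ γ := hγ.of_le (by simp)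
  have hγ' : ContDiff ℝ ∞ (deriv γ) := (contDiff_infty_iff_deriv.mp hγ2).2
  have hγdiff : Differentiable ℝ γ := hγ2.differentiable h1le
  have hγ'diff : Differentiable ℝ (deriv γ) := hγ'.differentiable h1le
  have hγc : Continuous γ := hγ2.continuous
  have hγ'c : Continuous (deriv γ) := hγ'.continuous
  have hγ''c : Continuous (deriv (deriv γ)) := (contDiff_infty_iff_deriv.mp hγ').2.continuous
  have hG2 : ContDiff ℝ ∞ (fun q : ℝ × E => g q.1 q.2) := hg.of_le (by simp)
  have hG2diff : Differentiable ℝ (fun q : ℝ × E => g q.1 q.2) := hG2.differentiable h1le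
  have hgC : Continuous (fun q : ℝ × E => g q.1 q.2) := hG2.continuous
  set Dg : ℝ × E → (ℝ × E) →L[ℝ] E →L[ℝ] E →L[ℝ] ℝ :=
    fderiv ℝ (fun q : ℝ × E => g q.1 q.2) with hDgdef
  have hDgC := hG2.continuous_fderiv h1le
  have hgt : ∀ t : ℝ, ContDiff ℝ ∞ (g t) := fun t =>
    hG2.comp ((contDiff_const (c := t)).prodMk contDiff_id)
  have hgtdiff : ∀ t : ℝ, Differentiable ℝ (g t) := fun t => (hgt t).differentiable h1le
  -- spatial partial derivative of `g`
  have hfderiv_x : ∀ (t : ℝ) (x w : E), fderiv ℝ (g t) x w = Dg (t, x) (0, w) := by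
    intro t x w
    have h1 : HasFDerivAt (fun q : ℝ × E => g q.1 q.2) (Dg (t, x)) (t, x) :=
      (hG2diff (t, x)).hasFDerivAt
    have h2 : HasFDerivAt (fun y : E => ((t, y) : ℝ × E))
        ((0 : E →L[ℝ] ℝ).prod (ContinuousLinearMap.id ℝ E)) x :=
      (hasFDerivAt_const t x).prodMk (hasFDerivAt_id x)
    have h4 : fderiv ℝ (g t) x
        = (Dg (t, x)).comp ((0 : E →L[ℝ] ℝ).prod (ContinuousLinearMap.id ℝ E)) :=
      (h1.comp (g := fun q : ℝ × E => g q.1 q.2) x h2).fderiv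
    rw [h4]
    simp
  -- time derivative of `g`
  have hgtime : ∀ (t : ℝ) (x : E), HasDerivAt (fun s => g s x) (Dg (t, x) (1, 0)) t := by
    intro t x
    have h1 : HasFDerivAt (fun q : ℝ × E => g q.1 q.2) (Dg (t, x)) (t, x) :=
      (hG2diff (t, x)).hasFDerivAt
    have h2 : HasDerivAt (fun s : ℝ => ((s, x) : ℝ × E)) ((1 : ℝ), (0 : E)) t :=
      (hasDerivAt_id t).prodMk (hasDerivAt_const t x)
    exact h1.comp_hasDerivAt (l := fun q : ℝ × E => g q.1 q.2) t h2
  have hA : ∀ u : ℝ, deriv (fun s => g s (γ u) (deriv γ u)) u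
      = Dg (u, γ u) (1, 0) (deriv γ u) := by
    intro u
    have h1 := (hgtime u (γ u)).clm_apply (hasDerivAt_const u (deriv γ u))
    simpa using h1.deriv
  -- the Euler–Lagrange one-form along `γ`
  set Φ : ℝ → E → ℝ := fun u w =>
    g u (γ u) (deriv (deriv γ) u) w + Dg (u, γ u) (0, deriv γ u) (deriv γ u) w
      + Dg (u, γ u) (1, 0) (deriv γ u) w
      - (1 / 2 : ℝ) * Dg (u, γ u) (0, w) (deriv γ u) (deriv γ u) with hΦdef
  have hΦg : ∀ (u : ℝ) (w : E), Φ u w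
      = g u (γ u) (deriv (deriv γ) u + Γ u (γ u) (deriv γ u) (deriv γ u)
          + Ginv u (γ u) (deriv (fun s => g s (γ u) (deriv γ u)) u)) w := by
    intro u w
    have h1 := hΓ u (γ u) (deriv γ u) (deriv γ u) w
    simp only [hfderiv_x] at h1
    have h2 : g u (γ u) (Ginv u (γ u) (deriv (fun s => g s (γ u) (deriv γ u)) u)) w
        = Dg (u, γ u) (1, 0) (deriv γ u) w := by
      rw [hGinv, hA]
    simp only [map_add, ContinuousLinearMap.add_apply]
    rw [h2]
    simp only [hΦdef]
    linarith
  have hP : Continuous fun u : ℝ => ((u, γ u) : ℝ × E) := continuous_id.prodMk hγc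
  have hgγ : Continuous fun u => g u (γ u) := hgC.comp hP
  have hDgγ := hDgC.comp hP
  have hΦcont : ∀ w : E, Continuous fun u => Φ u w := by
    intro w
    simp only [hΦdef]
    exact ((((hgγ.clm_apply hγ''c).clm_apply continuous_const).add
      (((hDgγ.clm_apply (continuous_const.prodMk hγ'c)).clm_apply hγ'c).clm_apply
        continuous_const)).add
      (((hDgγ.clm_apply continuous_const).clm_apply hγ'c).clm_apply continuous_const)).sub
      (continuous_const.mul
        (((hDgγ.clm_apply (continuous_const.prodMk continuous_const)).clm_apply
          hγ'c).clm_apply hγ'c))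
  have hΦsmul : ∀ (u : ℝ) (c : ℝ) (w : E), Φ u (c • w) = c * Φ u w := by
    intro u c w
    have h1 : ((0 : ℝ), c • w) = c • (((0 : ℝ), w) : ℝ × E) := by
      rw [Prod.smul_mk, smul_zero]
    simp only [hΦdef, h1, map_smul, ContinuousLinearMap.smul_apply, smul_eq_mul]
    ring
  -- first variation of the energy
  have hFder : ∀ V : ℝ → E, ContDiff ℝ ∞ V →
      HasDerivAt (fun s : ℝ =>
          ∫ u in a..b, (1 / 2 : ℝ) * g u (γ u + s • V u)
            (deriv (fun r => γ r + s • V r) u) (deriv (fun r => γ r + s • V r) u))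
        (g b (γ b) (deriv γ b) (V b) - g a (γ a) (deriv γ a) (V a)
          - ∫ u in a..b, Φ u (V u)) 0 := by
    intro V hV
    have hVdiff : Differentiable ℝ V := hV.differentiable h1le
    have hV' : ContDiff ℝ ∞ (deriv V) := (contDiff_infty_iff_deriv.mp hV).2
    have hVc : Continuous V := hV.continuous
    have hV'c : Continuous (deriv V) := hV'.continuous
    have hder_r : ∀ s u : ℝ, deriv (fun r => γ r + s • V r) u
        = deriv γ u + s • deriv V u := by
      intro s u
      exact ((hγdiff u).hasDerivAt.add ((hVdiff u).hasDerivAt.const_smul s)).deriv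
    have hfun : (fun s : ℝ =>
          ∫ u in a..b, (1 / 2 : ℝ) * g u (γ u + s • V u)
            (deriv (fun r => γ r + s • V r) u) (deriv (fun r => γ r + s • V r) u))
        = fun s : ℝ => ∫ u in a..b, (1 / 2 : ℝ) * g u (γ u + s • V u)
            (deriv γ u + s • deriv V u) (deriv γ u + s • deriv V u) := by
      funext s
      apply intervalIntegral.integral_congr
      intro u _
      simp only [hder_r]
    rw [hfun]
    set F' : ℝ → ℝ → ℝ := fun s u => (1 / 2 : ℝ) *
      ((Dg (u, γ u + s • V u) (0, V u) (deriv γ u + s • deriv V u)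
          + g u (γ u + s • V u) (deriv V u)) (deriv γ u + s • deriv V u)
        + g u (γ u + s • V u) (deriv γ u + s • deriv V u) (deriv V u)) with hF'def
    have hLd : ∀ (u : ℝ) (s : ℝ), HasDerivAt (fun σ : ℝ => (1 / 2 : ℝ) * g u (γ u + σ • V u)
        (deriv γ u + σ • deriv V u) (deriv γ u + σ • deriv V u)) (F' s u) s := by
      intro u s
      have hx : HasDerivAt (fun σ : ℝ => γ u + σ • V u) (V u) s := by
        simpa using ((hasDerivAt_id s).smul_const (V u)).const_add (γ u)
      have hv : HasDerivAt (fun σ : ℝ => deriv γ u + σ • deriv V u) (deriv V u) s := by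
        simpa using
          ((hasDerivAt_id s).smul_const (deriv V u)).const_add (deriv γ u)
      have hB : HasDerivAt (fun σ : ℝ => g u (γ u + σ • V u))
          (Dg (u, γ u + s • V u) (0, V u)) s := by
        have h1 : HasFDerivAt (g u) (fderiv ℝ (g u) (γ u + s • V u)) (γ u + s • V u) :=
          (hgtdiff u _).hasFDerivAt
        have h2 := h1.comp_hasDerivAt (l := g u) s hx
        have h3 : fderiv ℝ (g u) (γ u + s • V u) (V u) = Dg (u, γ u + s • V u) (0, V u) :=
          hfderiv_x u _ (V u)
        rwa [h3] at h2
      exact ((hB.clm_apply hv).clm_apply hv).const_mul (1 / 2 : ℝ)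
    have hxC : Continuous fun p : ℝ × ℝ => γ p.2 + p.1 • V p.2 :=
      (hγc.comp continuous_snd).add (continuous_fst.smul (hVc.comp continuous_snd))
    have hvC : Continuous fun p : ℝ × ℝ => deriv γ p.2 + p.1 • deriv V p.2 :=
      (hγ'c.comp continuous_snd).add (continuous_fst.smul (hV'c.comp continuous_snd))
    have hgxC : Continuous fun p : ℝ × ℝ => g p.2 (γ p.2 + p.1 • V p.2) :=
      hgC.comp (continuous_snd.prodMk hxC)
    have hDgxC :=
      hDgC.comp (continuous_snd.prodMk hxC)
    have hF'C : Continuous fun p : ℝ × ℝ => F' p.1 p.2 := by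
      simp only [hF'def]
      apply continuous_const.mul
      apply Continuous.add
      · exact (((hDgxC.clm_apply (continuous_const.prodMk (hVc.comp continuous_snd))).clm_apply
          hvC).add (hgxC.clm_apply (hV'c.comp continuous_snd))).clm_apply hvC
      · exact (hgxC.clm_apply hvC).clm_apply (hV'c.comp continuous_snd)
    obtain ⟨C, hC⟩ := (IsCompact.prod (isCompact_Icc (a := (-1:ℝ)) (b := 1))
      (isCompact_uIcc (a := a) (b := b))).exists_bound_of_continuousOn hF'C.continuousOn
    have hLcont : ∀ s : ℝ, Continuous fun u : ℝ => (1 / 2 : ℝ) * g u (γ u + s • V u)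
        (deriv γ u + s • deriv V u) (deriv γ u + s • deriv V u) := by
      intro s
      exact continuous_const.mul
        (((hgC.comp (continuous_id.prodMk (hγc.add (hVc.const_smul s)))).clm_apply
          (hγ'c.add (hV'c.const_smul s))).clm_apply (hγ'c.add (hV'c.const_smul s)))
    have hF'0c : Continuous fun u => F' 0 u :=
      hF'C.comp (continuous_const.prodMk continuous_id)
    have H := intervalIntegral.hasDerivAt_integral_of_dominated_loc_of_deriv_le
      (μ := MeasureTheory.volume) (s := Metric.ball 0 1) (a := a) (b := b)
      (F := fun s u => (1 / 2 : ℝ) * g u (γ u + s • V u)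
        (deriv γ u + s • deriv V u) (deriv γ u + s • deriv V u))
      (F' := F') (x₀ := (0 : ℝ)) (bound := fun _ => C)
      (Metric.ball_mem_nhds 0 one_pos)
      (Filter.Eventually.of_forall fun s => ((hLcont s).aestronglyMeasurable))
      ((hLcont 0).intervalIntegrable a b)
      hF'0c.aestronglyMeasurable
      (MeasureTheory.ae_of_all _ (fun u hu s hs => by
        have h5 : |s| < 1 := by
          have := Metric.mem_ball.mp hs
          rwa [Real.dist_eq, sub_zero] at this
        have hmem : ((s, u) : ℝ × ℝ) ∈ Set.Icc (-1:ℝ) 1 ×ˢ Set.uIcc a b := by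
          refine ⟨?_, Set.uIoc_subset_uIcc hu⟩
          have h6 := abs_lt.mp h5
          exact Set.mem_Icc.mpr ⟨by linarith [h6.1], by linarith [h6.2]⟩
        exact hC (s, u) hmem))
      intervalIntegrable_const
      (MeasureTheory.ae_of_all _ (fun u _ s _ => hLd u s))
    -- integrate by parts
    have hhd : ∀ u : ℝ, HasDerivAt (fun r => g r (γ r) (deriv γ r) (V r))
        (((Dg (u, γ u) (1, deriv γ u)) (deriv γ u) + g u (γ u) (deriv (deriv γ) u)) (V u)
          + g u (γ u) (deriv γ u) (deriv V u)) u := by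
      intro u
      have h1 : HasDerivAt (fun r : ℝ => g r (γ r)) (Dg (u, γ u) (1, deriv γ u)) u := by
        have hPd : HasDerivAt (fun r : ℝ => ((r, γ r) : ℝ × E)) (1, deriv γ u) u :=
          (hasDerivAt_id u).prodMk (hγdiff u).hasDerivAt
        exact (hG2diff (u, γ u)).hasFDerivAt.comp_hasDerivAt (l := fun q : ℝ × E => g q.1 q.2) u hPd
      exact (h1.clm_apply (hγ'diff u).hasDerivAt).clm_apply (hVdiff u).hasDerivAt
    have hDc : Continuous fun u : ℝ => ((Dg (u, γ u) (1, deriv γ u)) (deriv γ u)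
        + g u (γ u) (deriv (deriv γ) u)) (V u) + g u (γ u) (deriv γ u) (deriv V u) := by
      exact ((((hDgγ.clm_apply (continuous_const.prodMk hγ'c)).clm_apply hγ'c).add
        (hgγ.clm_apply hγ''c)).clm_apply hVc).add
        ((hgγ.clm_apply hγ'c).clm_apply hV'c)
    have hFTC : (∫ u in a..b, (((Dg (u, γ u) (1, deriv γ u)) (deriv γ u)
          + g u (γ u) (deriv (deriv γ) u)) (V u) + g u (γ u) (deriv γ u) (deriv V u)))
        = g b (γ b) (deriv γ b) (V b) - g a (γ a) (deriv γ a) (V a) :=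
      intervalIntegral.integral_eq_sub_of_hasDerivAt (fun u _ => hhd u)
        (hDc.intervalIntegrable a b)
    have hΦVc : Continuous fun u => Φ u (V u) := by
      simp only [hΦdef]
      exact ((((hgγ.clm_apply hγ''c).clm_apply hVc).add
        (((hDgγ.clm_apply (continuous_const.prodMk hγ'c)).clm_apply hγ'c).clm_apply hVc)).add
        (((hDgγ.clm_apply continuous_const).clm_apply hγ'c).clm_apply hVc)).sub
        (continuous_const.mul
          (((hDgγ.clm_apply (continuous_const.prodMk hVc)).clm_apply hγ'c).clm_apply hγ'c))
    have hsplit : ∀ u : ℝ, F' 0 u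
        = (((Dg (u, γ u) (1, deriv γ u)) (deriv γ u) + g u (γ u) (deriv (deriv γ) u)) (V u)
          + g u (γ u) (deriv γ u) (deriv V u)) - Φ u (V u) := by
      intro u
      have hlin : Dg (u, γ u) (1, deriv γ u) (deriv γ u) (V u)
          = Dg (u, γ u) (1, 0) (deriv γ u) (V u)
            + Dg (u, γ u) (0, deriv γ u) (deriv γ u) (V u) := by
        rw [show ((1:ℝ), deriv γ u) = ((1:ℝ), (0:E)) + ((0:ℝ), deriv γ u) by simp]
        rw [map_add]
        simp [ContinuousLinearMap.add_apply]
      have hsym := hgsymm u (γ u) (deriv V u) (deriv γ u)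
      simp only [hF'def, hΦdef, zero_smul, add_zero, ContinuousLinearMap.add_apply]
      linarith
    have hint : (∫ u in a..b, F' 0 u)
        = g b (γ b) (deriv γ b) (V b) - g a (γ a) (deriv γ a) (V a)
          - ∫ u in a..b, Φ u (V u) := by
      rw [intervalIntegral.integral_congr (g := fun u =>
        (((Dg (u, γ u) (1, deriv γ u)) (deriv γ u) + g u (γ u) (deriv (deriv γ) u)) (V u)
          + g u (γ u) (deriv γ u) (deriv V u)) - Φ u (V u)) (fun u _ => hsplit u)]
      rw [intervalIntegral.integral_sub (hDc.intervalIntegrable a b)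
        (hΦVc.intervalIntegrable a b), hFTC]
    rw [← hint]
    exact H.2
  constructor
  · -- critical ⟹ geodesic
    intro hcrit t ht
    have hW : ∀ w : E, Φ t w = 0 := by
      intro w
      have hfw : ∀ p : Polynomial ℝ,
          (∫ u in a..b, ((u - a) * (b - u) * Φ u w) * p.eval u) = 0 := by
        intro p
        set q : Polynomial ℝ :=
          (Polynomial.X - Polynomial.C a) * (Polynomial.C b - Polynomial.X) * p with hq
        have hqev : ∀ u : ℝ, q.eval u = (u - a) * (b - u) * p.eval u := by
          intro u; simp [hq]
        set V : ℝ → E := fun u => q.eval u • w with hVdef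
        have hVan : ContDiff ℝ (⊤ : ℕ∞) V := by
          apply ContDiff.smul _ contDiff_const
          apply AnalyticOnNhd.contDiff
          intro x _
          have h7 := (analyticAt_id (𝕜 := ℝ) (E := ℝ) (z := x)).aeval_polynomial q
          simpa [Polynomial.coe_aeval_eq_eval] using h7
        have hVa : V a = 0 := by simp [hVdef, hqev]
        have hVb : V b = 0 := by simp [hVdef, hqev]
        have hder := hFder V (hVan.of_le (by simp))
        have h0 := hcrit V hVan hVa hVb
        rw [hder.deriv, hVa, hVb] at h0
        simp only [map_zero] at h0
        have h1 : (∫ u in a..b, Φ u (V u)) = 0 := by linarith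
        rw [← h1]
        apply intervalIntegral.integral_congr
        intro u _
        show ((u - a) * (b - u) * Φ u w) * p.eval u = Φ u (V u)
        simp only [hVdef]
        rw [hqev, hΦsmul]
        ring
      have hcontw : Continuous fun u => (u - a) * (b - u) * Φ u w :=
        (((continuous_id.sub continuous_const)).mul
          (continuous_const.sub continuous_id)).mul (hΦcont w)
      have hzero := cont_orth_poly_zero hab hcontw hfw
      have hIoo : Set.EqOn (fun u => Φ u w) (fun _ => (0:ℝ)) (Set.Ioo a b) := by
        intro u hu
        have h2 := hzero u (Set.Ioo_subset_Icc_self hu)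
        have h3 : (u - a) * (b - u) ≠ 0 :=
          mul_ne_zero (sub_ne_zero.mpr (ne_of_gt hu.1)) (sub_ne_zero.mpr (ne_of_gt hu.2))
        rcases mul_eq_zero.mp h2 with h | h
        · exact absurd h h3
        · simpa using h
      have hcl := hIoo.closure (hΦcont w) continuous_const
      rw [closure_Ioo hab.ne] at hcl
      exact hcl ht
    by_contra hX
    have h1 := hgpos t (γ t) _ hX
    rw [← hΦg t] at h1
    rw [hW _] at h1
    exact lt_irrefl 0 h1
  · -- geodesic ⟹ critical
    intro hgeo V hV hVa hVb
    have hder := hFder V (hV.of_le (by simp))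
    rw [hder.deriv, hVa, hVb]
    have h1 : (∫ u in a..b, Φ u (V u)) = ∫ _u in a..b, (0:ℝ) := by
      apply intervalIntegral.integral_congr
      intro u hu
      rw [Set.uIcc_of_le hab.le] at hu
      have h2 := hgeo u hu
      show Φ u (V u) = 0
      rw [hΦg u (V u), h2]
      simp
    rw [h1]
    simp
end
end

section
/- Let (g_t) be a time-dependent Riemannian metric on a smooth manifold M, ĝ = dt⊗dt + ρ₂*(g_t) its suspension on ℝ × M, and ∇̂ the Levi-Civita connection of ĝ. Let γ : I → M be a smooth path and γ̂(t) = (t, γ(t)) the associated section of ℝ × M → ℝ. Then ∇̂_t γ̂′ = −(1/2) ġ(γ′,γ′) ∂/∂t + (∇_t γ′ + G⁻¹·Ġ·γ′), under the identification T_(t,x)(ℝ×M) ≅ T_tℝ ⊕ T_xM. Consequently, γ̂ is a geodesic of ∇̂ if and only if γ′ is isotropic with respect to ġ (i.e. ġ_t(γ′(t),γ′(t)) = 0 for all t) and γ is a geodesic of the time-dependent metric g (i.e. ∇_t γ′ + G⁻¹·Ġ·γ′ = 0). -/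
noncomputable section

open scoped Topology

/-- Auxiliary: the CLM turning a bilinear form on `E` into one on `ℝ × E`
acting through the second components. -/
def suspLL (E : Type*) [NormedAddCommGroup E] [NormedSpace ℝ E] :
    (E →L[ℝ] (E →L[ℝ] ℝ)) →L[ℝ] ((ℝ × E) →L[ℝ] ((ℝ × E) →L[ℝ] ℝ)) :=
  ((ContinuousLinearMap.compL ℝ (ℝ × E) E ((ℝ × E) →L[ℝ] ℝ)).flip
      (ContinuousLinearMap.snd ℝ ℝ E)).comp
    (ContinuousLinearMap.compL ℝ E (E →L[ℝ] ℝ) ((ℝ × E) →L[ℝ] ℝ)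
      ((ContinuousLinearMap.compL ℝ (ℝ × E) E ℝ).flip (ContinuousLinearMap.snd ℝ ℝ E)))

theorem suspLL_apply {E : Type*} [NormedAddCommGroup E] [NormedSpace ℝ E]
    (B : E →L[ℝ] E →L[ℝ] ℝ) (u v : ℝ × E) : suspLL E B u v = B u.2 v.2 := rfl

/-- Auxiliary: the bilinear form `(u,v) ↦ u.1 * v.1` on `ℝ × E`. -/
def suspCb (E : Type*) [NormedAddCommGroup E] [NormedSpace ℝ E] :
    (ℝ × E) →L[ℝ] ((ℝ × E) →L[ℝ] ℝ) :=
  ((((ContinuousLinearMap.compL ℝ (ℝ × E) ℝ ℝ).flip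
      (ContinuousLinearMap.fst ℝ ℝ E)).comp (ContinuousLinearMap.mul ℝ ℝ)).comp
    (ContinuousLinearMap.fst ℝ ℝ E))

theorem suspCb_apply {E : Type*} [NormedAddCommGroup E] [NormedSpace ℝ E]
    (u v : ℝ × E) : suspCb E u v = u.1 * v.1 := rfl

set_option maxHeartbeats 2000000 in
theorem suspension_geodesic_iff
    {E : Type*} [NormedAddCommGroup E] [NormedSpace ℝ E]
    (g : ℝ → E → E →L[ℝ] E →L[ℝ] ℝ)
    (hg : ContDiff ℝ (⊤ : ℕ∞) fun q : ℝ × E => g q.1 q.2)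
    (hgsymm : ∀ t x u v, g t x u v = g t x v u)
    (hgpos : ∀ t x v, v ≠ 0 → 0 < g t x v v)
    (Γ : ℝ → E → E →L[ℝ] E →L[ℝ] E)
    (hΓ : ∀ t x u v w,
      2 * g t x (Γ t x u v) w
        = fderiv ℝ (g t) x u v w + fderiv ℝ (g t) x v u w - fderiv ℝ (g t) x w u v)
    (Ginv : ℝ → E → (E →L[ℝ] ℝ) →L[ℝ] E)
    (hGinv : ∀ t x φ w, g t x (Ginv t x φ) w = φ w)
    (gh : ℝ × E → (ℝ × E) →L[ℝ] (ℝ × E) →L[ℝ] ℝ)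
    (hgh : ∀ (t : ℝ) (x : E) (u v : ℝ × E),
        gh (t, x) u v = u.1 * v.1 + g t x u.2 v.2)
    (Γh : ℝ × E → (ℝ × E) →L[ℝ] (ℝ × E) →L[ℝ] (ℝ × E))
    (hΓh : ∀ (y : ℝ × E) (u v w : ℝ × E),
      2 * gh y (Γh y u v) w
        = fderiv ℝ gh y u v w + fderiv ℝ gh y v u w - fderiv ℝ gh y w u v)
    (γ : ℝ → E) (hγ : ContDiff ℝ (⊤ : ℕ∞) γ)
    -- the section γ̂(t) = (t, γ(t)) of ℝ × M → ℝ
    (γh : ℝ → ℝ × E) (hγh : ∀ s, γh s = (s, γ s)) :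
    -- the formula for ∇̂_t γ̂'
    (∀ t : ℝ,
      deriv (deriv γh) t + Γh (γh t) (deriv γh t) (deriv γh t)
        = (-(1 / 2 : ℝ) * deriv (fun s => g s (γ t) (deriv γ t) (deriv γ t)) t,
           deriv (deriv γ) t + Γ t (γ t) (deriv γ t) (deriv γ t)
             + Ginv t (γ t) (deriv (fun s => g s (γ t) (deriv γ t)) t)))
    ∧
    -- γ̂ geodesic of ∇̂ ↔ (γ' isotropic for ġ) ∧ (γ geodesic of the td metric)
    ((∀ t : ℝ, deriv (deriv γh) t + Γh (γh t) (deriv γh t) (deriv γh t) = 0)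
      ↔ ((∀ t : ℝ, deriv (fun s => g s (γ t) (deriv γ t) (deriv γ t)) t = 0)
          ∧ (∀ t : ℝ,
              deriv (deriv γ) t + Γ t (γ t) (deriv γ t) (deriv γ t)
                + Ginv t (γ t) (deriv (fun s => g s (γ t) (deriv γ t)) t) = 0))) := by
  have hγhfe : γh = fun s => (s, γ s) := funext hγh
  subst hγhfe
  -- differentiability facts
  have hGdiff : Differentiable ℝ (fun q : ℝ × E => g q.1 q.2) := hg.differentiable (by simp)
  have hγd : Differentiable ℝ γ := hγ.differentiable (by simp)
  have hγ'd : Differentiable ℝ (deriv γ) := by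
    have h1 : ContDiff ℝ ((⊤ : ℕ∞) : WithTop ℕ∞) γ := hγ.of_le (by simp)
    exact ((contDiff_infty_iff_deriv.mp h1).2).differentiable (by simp)
  -- injectivity of the musical map of g
  have hinj : ∀ t x (z z' : E), (∀ w, g t x z w = g t x z' w) → z = z' := by
    intro t x z z' h
    by_contra hne
    have hz : z - z' ≠ 0 := sub_ne_zero.mpr hne
    have hpos := hgpos t x (z - z') hz
    have h0 : g t x (z - z') (z - z') = 0 := by
      have h1 := h (z - z')
      simp only [map_sub, ContinuousLinearMap.sub_apply] at h1 ⊢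
      linarith
    rw [h0] at hpos
    exact lt_irrefl 0 hpos
  -- injectivity of the musical map of gh
  have hinjP : ∀ t x (z z' : ℝ × E), (∀ w, gh (t, x) z w = gh (t, x) z' w) → z = z' := by
    intro t x z z' h
    have h1 := h (1, 0)
    rw [hgh, hgh] at h1
    simp only [mul_one, map_zero, add_zero] at h1
    have h2 : ∀ w2 : E, g t x z.2 w2 = g t x z'.2 w2 := by
      intro w2
      have := h (0, w2)
      rw [hgh, hgh] at this
      simpa using this
    exact Prod.ext h1 (hinj t x _ _ h2)
  -- the derivative of gh
  have hghF : gh = fun q => suspCb E + suspLL E ((fun q : ℝ × E => g q.1 q.2) q) := by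
    funext q
    rcases q with ⟨t, x⟩
    refine ContinuousLinearMap.ext fun u => ContinuousLinearMap.ext fun v => ?_
    rw [hgh]
    simp [ContinuousLinearMap.add_apply, suspCb_apply, suspLL_apply]
  have hDgh : ∀ y : ℝ × E,
      fderiv ℝ gh y = (suspLL E).comp (fderiv ℝ (fun q : ℝ × E => g q.1 q.2) y) := by
    intro y
    have hc := ContinuousLinearMap.hasFDerivAt (𝕜 := ℝ) (E := E →L[ℝ] (E →L[ℝ] ℝ))
      (F := (ℝ × E) →L[ℝ] ((ℝ × E) →L[ℝ] ℝ)) (suspLL E)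
      (x := (fun q : ℝ × E => g q.1 q.2) y)
    have h0 : HasFDerivAt ((suspLL E) ∘ fun q : ℝ × E => g q.1 q.2)
        ((suspLL E).comp (fderiv ℝ (fun q : ℝ × E => g q.1 q.2) y)) y := by
      refine HasFDerivAt.comp (𝕜 := ℝ) (E := ℝ × E) (F := E →L[ℝ] E →L[ℝ] ℝ)
        (G := (ℝ × E) →L[ℝ] (ℝ × E) →L[ℝ] ℝ) y hc ?_
      exact (hGdiff y).hasFDerivAt
    have h1 : HasFDerivAt (fun q => suspCb E + suspLL E ((fun q : ℝ × E => g q.1 q.2) q))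
        ((suspLL E).comp (fderiv ℝ (fun q : ℝ × E => g q.1 q.2) y)) y :=
      HasFDerivAt.const_add (𝕜 := ℝ) (suspCb E) h0
    rw [hghF]
    exact h1.fderiv
  -- derivatives of γ̂
  have hd1 : ∀ s : ℝ, HasDerivAt (fun u : ℝ => (u, γ u)) (1, deriv γ s) s := fun s =>
    HasDerivAt.prodMk (hasDerivAt_id s) (hγd s).hasDerivAt
  have hderiv_γh : deriv (fun s : ℝ => (s, γ s)) = fun s => (1, deriv γ s) :=
    funext fun s => (hd1 s).deriv
  have hd2 : ∀ t : ℝ, deriv (deriv (fun s : ℝ => (s, γ s))) t = (0, deriv (deriv γ) t) := by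
    intro t
    rw [hderiv_γh]
    exact (HasDerivAt.prodMk (hasDerivAt_const t (1 : ℝ)) (hγ'd t).hasDerivAt).deriv
  -- the main formula
  have main : ∀ t : ℝ,
      deriv (deriv (fun s : ℝ => (s, γ s))) t
          + Γh ((fun s : ℝ => (s, γ s)) t) (deriv (fun s : ℝ => (s, γ s)) t)
              (deriv (fun s : ℝ => (s, γ s)) t)
        = (-(1 / 2 : ℝ) * deriv (fun s => g s (γ t) (deriv γ t) (deriv γ t)) t,
           deriv (deriv γ) t + Γ t (γ t) (deriv γ t) (deriv γ t)
             + Ginv t (γ t) (deriv (fun s => g s (γ t) (deriv γ t)) t)) := by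
    intro t
    have hyγ : (fun s : ℝ => (s, γ s)) t = (t, γ t) := rfl
    rw [hd2 t]
    simp only [hderiv_γh, hyγ]
    set x := γ t with hx
    set v := deriv γ t with hv
    set D := fderiv ℝ (fun q : ℝ × E => g q.1 q.2) (t, x) with hD
    -- time derivative facts
    have h2 : HasDerivAt (fun s => g s x) (D ((1 : ℝ), (0 : E))) t := by
      have h1 : HasDerivAt (fun s : ℝ => ((s, x) : ℝ × E)) ((1 : ℝ), (0 : E)) t :=
        HasDerivAt.prodMk (hasDerivAt_id t) (hasDerivAt_const t x)
      refine HasFDerivAt.comp_hasDerivAt (l := fun q : ℝ × E => g q.1 q.2) t ?_ h1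
      exact (hGdiff (t, x)).hasFDerivAt
    have h3 : HasDerivAt (fun s => g s x v) (D (1, 0) v) t := by
      simpa using h2.clm_apply (hasDerivAt_const t v)
    have hφ : deriv (fun s => g s x v) t = D (1, 0) v := h3.deriv
    have hφ2 : deriv (fun s => g s x v v) t = D (1, 0) v v := by
      simpa using (h3.clm_apply (hasDerivAt_const t v)).deriv
    -- spatial derivative
    have hsp : ∀ w : E, fderiv ℝ (g t) x w = D (0, w) := by
      intro w
      have h1 : HasFDerivAt (fun z : E => ((t, z) : ℝ × E))
          (((0 : E →L[ℝ] ℝ)).prod (ContinuousLinearMap.id ℝ E)) x :=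
        HasFDerivAt.prodMk (hasFDerivAt_const t x) (hasFDerivAt_id x)
      have h4 : HasFDerivAt (g t)
          (D.comp (((0 : E →L[ℝ] ℝ)).prod (ContinuousLinearMap.id ℝ E))) x :=
        by
          refine HasFDerivAt.comp (g := fun q : ℝ × E => g q.1 q.2) x ?_ h1
          exact (hGdiff (t, x)).hasFDerivAt
      rw [h4.fderiv]
      simp
    -- Koszul identity for Γ
    have hKg : ∀ w2 : E, 2 * g t x (Γ t x v v) w2 = 2 * D (0, v) v w2 - D (0, w2) v v := by
      intro w2
      have := hΓ t x v v w2
      rw [hsp v, hsp w2] at this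
      linarith
    -- the candidate for Γh (t,x) (1,v) (1,v)
    have key : Γh (t, x) ((1 : ℝ), v) ((1 : ℝ), v)
        = (-(1 / 2 : ℝ) * D (1, 0) v v,
           Γ t x v v + Ginv t x (D (1, 0) v)) := by
      apply hinjP t x
      intro w
      have hK := hΓh (t, x) (1, v) (1, v) w
      rw [hDgh (t, x)] at hK
      simp only [ContinuousLinearMap.coe_comp', Function.comp_apply, suspLL_apply] at hK
      -- linearity of D
      have hsplit : D ((1 : ℝ), v) = D (1, 0) + D (0, v) := by
        rw [← map_add]
        norm_num
      have hsplitw : D w = w.1 • D (1, 0) + D (0, w.2) := by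
        rw [← map_smul, ← map_add]
        congr 1
        exact Prod.ext (by simp) (by simp)
      rw [hsplit, hsplitw] at hK
      simp only [ContinuousLinearMap.add_apply, ContinuousLinearMap.smul_apply,
        smul_eq_mul] at hK
      -- compute gh (t,x) candidate w
      have hrhs : gh (t, x) (-(1 / 2 : ℝ) * D (1, 0) v v,
          Γ t x v v + Ginv t x (D (1, 0) v)) w
          = -(1 / 2 : ℝ) * D (1, 0) v v * w.1 + g t x (Γ t x v v) w.2
            + D (1, 0) v w.2 := by
        rw [hgh]
        simp only [map_add, ContinuousLinearMap.add_apply, hGinv]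
        ring
      have hgoal : (2 : ℝ) * gh (t, x) (Γh (t, x) (1, v) (1, v)) w
          = 2 * gh (t, x) (-(1 / 2 : ℝ) * D (1, 0) v v,
              Γ t x v v + Ginv t x (D (1, 0) v)) w := by
        rw [hrhs]
        have hk2 := hKg w.2
        linarith
      exact mul_left_cancel₀ two_ne_zero hgoal
    rw [key, hφ, hφ2]
    exact Prod.ext (by simp) (by simp [add_assoc])
  refine ⟨main, ?_⟩
  constructor
  · intro h
    constructor <;> intro t <;>
      [skip; skip] <;>
      · have ht := h t
        rw [main t, Prod.mk_eq_zero] at ht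
        first
          | (have := ht.1; linarith)
          | exact ht.2
  · rintro ⟨h1, h2⟩ t
    rw [main t, Prod.mk_eq_zero]
    exact ⟨by rw [h1 t]; ring, h2 t⟩
end
end

section
/- Let ∇̂ be a connection (linear connection on the tangent bundle) on the product manifold ℝ × M. Then for any two vector fields X̂ = f⁰ ∂/∂t + X and Ŷ = g⁰ ∂/∂t + Y on ℝ × M (decomposed via T(ℝ×M) ≅ Tℝ ⊕ TM), the covariant derivative can be uniquely expressed as ∇̂_X̂ Ŷ = ( f⁰ ġ⁰ + L_X g⁰ + λ f⁰g⁰ + α(X) g⁰ + β(Y) f⁰ + ε(X,Y) ) ∂/∂t + ( f⁰ Ẏ + ∇_X Y + C f⁰g⁰ + A(X) g⁰ + B(Y) f⁰ ), where λ is a time-dependent function on M, α and β are time-dependent 1-forms on M, ε is a time-dependent 2-covariant tensor field on M, C is a time-dependent vector field on M, A and B are time-dependent endomorphisms of TM, and ∇ = (^t∇) is a time-dependent family of connections on M. These objects are defined geometrically by: λ = ⟨dt, Tρ₁ ∘ ∇̂_{∂/∂t} ∂/∂t⟩, α(X) = ⟨dt, Tρ₁ ∘ ∇̂_X ∂/∂t⟩,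 β(Y) = ⟨dt, Tρ₁ ∘ ∇̂_{∂/∂t} Y⟩, ε(X,Y) = ⟨dt, Tρ₁ ∘ ∇̂_X Y⟩, C = Tρ₂ ∘ ∇̂_{∂/∂t} ∂/∂t, A(X) = Tρ₂ ∘ ∇̂_X ∂/∂t, B(Y) = Tρ₂ ∘ ∇̂_{∂/∂t} Y − Ẏ, ∇_X Y = Tρ₂ ∘ ∇̂_X Y; in particular β, ε, B and ∇ as so defined are well defined (tensorial / a connection, respectively). -/
/-!
STATEMENT 11 (Theorem 6.1 of the paper): any connection `∇̂` on `ℝ × M`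
decomposes uniquely, on vector fields `X̂ = f⁰ ∂/∂t + X`, `Ŷ = g⁰ ∂/∂t + Y`, as
`∇̂_X̂ Ŷ = (f⁰ġ⁰ + L_X g⁰ + λ f⁰g⁰ + α(X) g⁰ + β(Y) f⁰ + ε(X,Y)) ∂/∂t
          + (f⁰ Ẏ + ∇_X Y + C f⁰g⁰ + A(X) g⁰ + B(Y) f⁰)`,
with `λ` a time-dependent function, `α, β` time-dependent 1-forms, `ε` a
time-dependent 2-covariant tensor field, `C` a time-dependent vector field,
`A, B` time-dependent endomorphisms of `TM` and `∇` a time-dependent connection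
on `M`.

Model: `M` is a real normed space `E`; the connection `∇̂` on `ℝ × E` is encoded
by its (smooth) Christoffel operator `Γh`, so that
`∇̂_X̂ Ŷ (t,p) = D Ŷ (t,p) (X̂(t,p)) + Γh (t,p) (X̂(t,p)) (Ŷ(t,p))`; the
time-dependent connection `∇` on `M` is encoded by its Christoffel operator
`conn`, so that `∇_X Y (t,p) = D(Y t) p (X t p) + conn t p (X t p) (Y t p)`.
-/

noncomputable section

open scoped Topology

/-- The data `(λ, α, β, ε, C, A, B, ∇)` decomposing a connection on `ℝ × M`:
a time-dependent function, two time-dependent 1-forms, a time-dependent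
2-covariant tensor field, a time-dependent vector field, two time-dependent
endomorphisms of `TM`, and a time-dependent connection (Christoffel operator)
on `M`, all smooth. -/
structure TDConnectionData (E : Type*) [NormedAddCommGroup E] [NormedSpace ℝ E] where
  lam : ℝ → E → ℝ
  alpha : ℝ → E → E →L[ℝ] ℝ
  beta : ℝ → E → E →L[ℝ] ℝ
  eps : ℝ → E → E →L[ℝ] E →L[ℝ] ℝ
  C : ℝ → E → E
  A : ℝ → E → E →L[ℝ] E
  B : ℝ → E → E →L[ℝ] E
  conn : ℝ → E → E →L[ℝ] E →L[ℝ] E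
  lam_smooth : ContDiff ℝ (⊤ : ℕ∞) fun q : ℝ × E => lam q.1 q.2
  alpha_smooth : ContDiff ℝ (⊤ : ℕ∞) fun q : ℝ × E => alpha q.1 q.2
  beta_smooth : ContDiff ℝ (⊤ : ℕ∞) fun q : ℝ × E => beta q.1 q.2
  eps_smooth : ContDiff ℝ (⊤ : ℕ∞) fun q : ℝ × E => eps q.1 q.2
  C_smooth : ContDiff ℝ (⊤ : ℕ∞) fun q : ℝ × E => C q.1 q.2
  A_smooth : ContDiff ℝ (⊤ : ℕ∞) fun q : ℝ × E => A q.1 q.2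
  B_smooth : ContDiff ℝ (⊤ : ℕ∞) fun q : ℝ × E => B q.1 q.2
  conn_smooth : ContDiff ℝ (⊤ : ℕ∞) fun q : ℝ × E => conn q.1 q.2


private lemma tdcd_ext {E : Type*} [NormedAddCommGroup E] [NormedSpace ℝ E]
    {d₁ d₂ : TDConnectionData E}
    (h₁ : d₁.lam = d₂.lam) (h₂ : d₁.alpha = d₂.alpha) (h₃ : d₁.beta = d₂.beta)
    (h₄ : d₁.eps = d₂.eps) (h₅ : d₁.C = d₂.C) (h₆ : d₁.A = d₂.A)
    (h₇ : d₁.B = d₂.B) (h₈ : d₁.conn = d₂.conn) : d₁ = d₂ := by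
  cases d₁; cases d₂
  simp only at h₁ h₂ h₃ h₄ h₅ h₆ h₇ h₈
  subst h₁ h₂ h₃ h₄ h₅ h₆ h₇ h₈
  rfl

private lemma fderiv_split {E F : Type*} [NormedAddCommGroup E] [NormedSpace ℝ E]
    [NormedAddCommGroup F] [NormedSpace ℝ F]
    {G : ℝ × E → F} {t : ℝ} {p : E} (hG : DifferentiableAt ℝ G (t, p)) (a : ℝ) (x : E) :
    fderiv ℝ G (t, p) (a, x)
      = a • deriv (fun s => G (s, p)) t + fderiv ℝ (fun y => G (t, y)) p x := by
  have h1 : HasFDerivAt (fun s : ℝ => (s, p)) (ContinuousLinearMap.inl ℝ ℝ E) t :=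
    HasFDerivAt.prodMk (hasFDerivAt_id t) (hasFDerivAt_const p t)
  have h2 : HasFDerivAt (fun y : E => (t, y)) (ContinuousLinearMap.inr ℝ ℝ E) p :=
    HasFDerivAt.prodMk (hasFDerivAt_const t p) (hasFDerivAt_id p)
  have hG' := hG.hasFDerivAt
  have e1 : deriv (fun s => G (s, p)) t = fderiv ℝ G (t, p) ((1 : ℝ), (0 : E)) := by
    have := ((hG'.comp t h1).hasDerivAt).deriv
    simpa [Function.comp_def] using this
  have e2 : fderiv ℝ (fun y => G (t, y)) p x = fderiv ℝ G (t, p) ((0 : ℝ), x) := by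
    have h' : HasFDerivAt (fun y => G (t, y))
        ((fderiv ℝ G (t, p)).comp (ContinuousLinearMap.inr ℝ ℝ E)) p := hG'.comp p h2
    rw [h'.fderiv]; rfl
  have hv : ((a, x) : ℝ × E) = a • ((1 : ℝ), (0 : E)) + ((0 : ℝ), x) := by
    simp [Prod.ext_iff]
  rw [hv, map_add, map_smul, e1, e2]

set_option maxHeartbeats 2000000

theorem connection_on_product_decomposition
    {E : Type*} [NormedAddCommGroup E] [NormedSpace ℝ E]
    -- a connection on ℝ × M, encoded by its Christoffel operator
    (Γh : ℝ × E → (ℝ × E) →L[ℝ] (ℝ × E) →L[ℝ] (ℝ × E))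
    (hΓh : ContDiff ℝ (⊤ : ℕ∞) Γh) :
    ∃! d : TDConnectionData E,
      ∀ (f0 g0 : ℝ → E → ℝ) (X Y : ℝ → E → E),
        (ContDiff ℝ (⊤ : ℕ∞) fun q : ℝ × E => f0 q.1 q.2) →
        (ContDiff ℝ (⊤ : ℕ∞) fun q : ℝ × E => g0 q.1 q.2) →
        (ContDiff ℝ (⊤ : ℕ∞) fun q : ℝ × E => X q.1 q.2) →
        (ContDiff ℝ (⊤ : ℕ∞) fun q : ℝ × E => Y q.1 q.2) →
        ∀ (t : ℝ) (p : E),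
          -- `∇̂_X̂ Ŷ` at (t,p), with `X̂ = f⁰ ∂/∂t + X`, `Ŷ = g⁰ ∂/∂t + Y` …
          fderiv ℝ (fun q : ℝ × E => (g0 q.1 q.2, Y q.1 q.2)) (t, p) (f0 t p, X t p)
              + Γh (t, p) (f0 t p, X t p) (g0 t p, Y t p)
            -- … equals the decomposed expression
            = (f0 t p * deriv (fun s => g0 s p) t
                  + fderiv ℝ (g0 t) p (X t p)
                  + d.lam t p * (f0 t p * g0 t p)
                  + d.alpha t p (X t p) * g0 t p
                  + d.beta t p (Y t p) * f0 t p
                  + d.eps t p (X t p) (Y t p),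
               f0 t p • deriv (fun s => Y s p) t
                  + (fderiv ℝ (Y t) p (X t p) + d.conn t p (X t p) (Y t p))
                  + (f0 t p * g0 t p) • d.C t p
                  + g0 t p • d.A t p (X t p)
                  + f0 t p • d.B t p (Y t p)) := by
  classical
  set e : ℝ × E := ((1 : ℝ), (0 : E)) with he
  set fst' := ContinuousLinearMap.fst ℝ ℝ E with hfst'
  set snd' := ContinuousLinearMap.snd ℝ ℝ E with hsnd'
  set inr' := ContinuousLinearMap.inr ℝ ℝ E with hinr'
  -- auxiliary CLMs
  set Ap : ((ℝ × E) →L[ℝ] (ℝ × E)) →L[ℝ] (ℝ × E) := ContinuousLinearMap.apply ℝ (ℝ × E) e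
    with hAp
  set Pre : ((ℝ × E) →L[ℝ] (ℝ × E)) →L[ℝ] (E →L[ℝ] (ℝ × E)) :=
    (ContinuousLinearMap.compL ℝ E (ℝ × E) (ℝ × E)).flip inr' with hPre
  set Λ1 : ((ℝ × E) →L[ℝ] (ℝ × E)) →L[ℝ] (E →L[ℝ] ℝ) :=
    (ContinuousLinearMap.compL ℝ E (ℝ × E) ℝ fst').comp Pre with hΛ1
  set Λ2 : ((ℝ × E) →L[ℝ] (ℝ × E)) →L[ℝ] (E →L[ℝ] E) :=
    (ContinuousLinearMap.compL ℝ E (ℝ × E) E snd').comp Pre with hΛ2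
  refine ⟨⟨fun t p => (Γh (t, p) e e).1,
           fun t p => (fst'.comp Ap).comp ((Γh (t, p)).comp inr'),
           fun t p => fst'.comp ((Γh (t, p) e).comp inr'),
           fun t p => Λ1.comp ((Γh (t, p)).comp inr'),
           fun t p => (Γh (t, p) e e).2,
           fun t p => (snd'.comp Ap).comp ((Γh (t, p)).comp inr'),
           fun t p => snd'.comp ((Γh (t, p) e).comp inr'),
           fun t p => Λ2.comp ((Γh (t, p)).comp inr'),
           ?_, ?_, ?_, ?_, ?_, ?_, ?_, ?_⟩, ?_, ?_⟩
  · exact (((hΓh.comp contDiff_id).clm_apply contDiff_const).clm_apply contDiff_const).fst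
  · exact contDiff_const.clm_comp ((hΓh.comp contDiff_id).clm_comp contDiff_const)
  · exact contDiff_const.clm_comp (((hΓh.comp contDiff_id).clm_apply contDiff_const).clm_comp
      contDiff_const)
  · exact contDiff_const.clm_comp ((hΓh.comp contDiff_id).clm_comp contDiff_const)
  · exact (((hΓh.comp contDiff_id).clm_apply contDiff_const).clm_apply contDiff_const).snd
  · exact contDiff_const.clm_comp ((hΓh.comp contDiff_id).clm_comp contDiff_const)
  · exact contDiff_const.clm_comp (((hΓh.comp contDiff_id).clm_apply contDiff_const).clm_comp
      contDiff_const)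
  · exact contDiff_const.clm_comp ((hΓh.comp contDiff_id).clm_comp contDiff_const)
  · -- the decomposition identity
    intro f0 g0 X Y hf0 hg0 hX hY t p
    have hGg : DifferentiableAt ℝ (fun q : ℝ × E => g0 q.1 q.2) (t, p) :=
      (hg0.differentiable (by simp)).differentiableAt
    have hGY : DifferentiableAt ℝ (fun q : ℝ × E => Y q.1 q.2) (t, p) :=
      (hY.differentiable (by simp)).differentiableAt
    have hF : DifferentiableAt ℝ (fun q : ℝ × E => (g0 q.1 q.2, Y q.1 q.2)) (t, p) :=
      hGg.prodMk hGY
    have hsplit := fderiv_split hF (f0 t p) (X t p)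
    have hslice : DifferentiableAt ℝ (fun y : E => (t, y)) p :=
      (differentiableAt_const t).prodMk differentiableAt_id
    have hgs : DifferentiableAt ℝ (g0 t) p := hGg.comp p hslice
    have hYs : DifferentiableAt ℝ (Y t) p := hGY.comp p hslice
    have htime : DifferentiableAt ℝ (fun s : ℝ => (s, p)) t :=
      differentiableAt_id.prodMk (differentiableAt_const p)
    have hgt : DifferentiableAt ℝ (fun s => g0 s p) t :=
      (hGg.comp t htime : DifferentiableAt ℝ ((fun q : ℝ × E => g0 q.1 q.2) ∘ fun s : ℝ => (s, p)) t)
    have hYt : DifferentiableAt ℝ (fun s => Y s p) t :=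
      (hGY.comp t htime : DifferentiableAt ℝ ((fun q : ℝ × E => Y q.1 q.2) ∘ fun s : ℝ => (s, p)) t)
    have hderiv : deriv (fun s => (g0 s p, Y s p)) t
        = (deriv (fun s => g0 s p) t, deriv (fun s => Y s p) t) :=
      (hgt.hasDerivAt.prodMk hYt.hasDerivAt).deriv
    have hfd : fderiv ℝ (fun y => (g0 t y, Y t y)) p
        = (fderiv ℝ (g0 t) p).prod (fderiv ℝ (Y t) p) :=
      DifferentiableAt.fderiv_prodMk hgs hYs
    have hv : ((f0 t p, X t p) : ℝ × E) = f0 t p • e + inr' (X t p) := by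
      simp [he, hinr', Prod.ext_iff]
    have hw : ((g0 t p, Y t p) : ℝ × E) = g0 t p • e + inr' (Y t p) := by
      simp [he, hinr', Prod.ext_iff]
    rw [hsplit, hderiv, hfd, hv, hw]
    simp only [map_add, map_smul, ContinuousLinearMap.add_apply,
      ContinuousLinearMap.smul_apply, ContinuousLinearMap.comp_apply,
      ContinuousLinearMap.prod_apply, hΛ1, hΛ2, hPre, hAp,
      ContinuousLinearMap.compL_apply, ContinuousLinearMap.flip_apply,
      ContinuousLinearMap.apply_apply, hfst', hsnd',
      ContinuousLinearMap.coe_fst', ContinuousLinearMap.coe_snd']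
    rw [Prod.ext_iff]
    constructor
    · simp only [Prod.fst_add, Prod.smul_fst, smul_eq_mul]
      ring
    · simp only [Prod.snd_add, Prod.smul_snd, smul_smul]
      module
  · -- uniqueness
    intro d hd
    apply tdcd_ext
    · funext t p
      have h1 := hd (fun _ _ => 1) (fun _ _ => 1) (fun _ _ => 0) (fun _ _ => 0)
        contDiff_const contDiff_const contDiff_const contDiff_const t p
      simp only [fderiv_const_apply, ContinuousLinearMap.zero_apply, zero_add, map_zero,
        deriv_const', mul_zero, mul_one, one_mul, zero_mul, add_zero, zero_add,
        fderiv_const, Pi.zero_apply, one_smul, zero_smul, smul_zero,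
        ContinuousLinearMap.comp_apply, ContinuousLinearMap.zero_apply] at h1
      have := congrArg Prod.fst h1
      simpa [hfst', he] using this.symm
    · funext t p
      ext x
      have h1 := hd (fun _ _ => 0) (fun _ _ => 1) (fun _ _ => x) (fun _ _ => 0)
        contDiff_const contDiff_const contDiff_const contDiff_const t p
      simp only [fderiv_const_apply, ContinuousLinearMap.zero_apply, zero_add, map_zero,
        deriv_const', mul_zero, mul_one, one_mul, zero_mul, add_zero, zero_add,
        fderiv_const, Pi.zero_apply, one_smul, zero_smul, smul_zero,
        ContinuousLinearMap.comp_apply, ContinuousLinearMap.zero_apply] at h1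
      have := congrArg Prod.fst h1
      simpa [hfst', hAp, he, hinr'] using this.symm
    · funext t p
      ext y
      have h1 := hd (fun _ _ => 1) (fun _ _ => 0) (fun _ _ => 0) (fun _ _ => y)
        contDiff_const contDiff_const contDiff_const contDiff_const t p
      simp only [fderiv_const_apply, ContinuousLinearMap.zero_apply, zero_add, map_zero,
        deriv_const', mul_zero, mul_one, one_mul, zero_mul, add_zero, zero_add,
        fderiv_const, Pi.zero_apply, one_smul, zero_smul, smul_zero,
        ContinuousLinearMap.comp_apply, ContinuousLinearMap.zero_apply] at h1
      have := congrArg Prod.fst h1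
      simpa [hfst', he, hinr'] using this.symm
    · funext t p
      ext x y
      have h1 := hd (fun _ _ => 0) (fun _ _ => 0) (fun _ _ => x) (fun _ _ => y)
        contDiff_const contDiff_const contDiff_const contDiff_const t p
      simp only [fderiv_const_apply, ContinuousLinearMap.zero_apply, zero_add, map_zero,
        deriv_const', mul_zero, mul_one, one_mul, zero_mul, add_zero, zero_add,
        fderiv_const, Pi.zero_apply, one_smul, zero_smul, smul_zero,
        ContinuousLinearMap.comp_apply, ContinuousLinearMap.zero_apply] at h1
      have := congrArg Prod.fst h1
      simpa [hfst', hΛ1, hPre, hinr'] using this.symm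
    · funext t p
      have h1 := hd (fun _ _ => 1) (fun _ _ => 1) (fun _ _ => 0) (fun _ _ => 0)
        contDiff_const contDiff_const contDiff_const contDiff_const t p
      simp only [fderiv_const_apply, ContinuousLinearMap.zero_apply, zero_add, map_zero,
        deriv_const', mul_zero, mul_one, one_mul, zero_mul, add_zero, zero_add,
        fderiv_const, Pi.zero_apply, one_smul, zero_smul, smul_zero,
        ContinuousLinearMap.comp_apply, ContinuousLinearMap.zero_apply] at h1
      have := congrArg Prod.snd h1
      simpa [hsnd', he] using this.symm
    · funext t p
      ext x
      have h1 := hd (fun _ _ => 0) (fun _ _ => 1) (fun _ _ => x) (fun _ _ => 0)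
        contDiff_const contDiff_const contDiff_const contDiff_const t p
      simp only [fderiv_const_apply, ContinuousLinearMap.zero_apply, zero_add, map_zero,
        deriv_const', mul_zero, mul_one, one_mul, zero_mul, add_zero, zero_add,
        fderiv_const, Pi.zero_apply, one_smul, zero_smul, smul_zero,
        ContinuousLinearMap.comp_apply, ContinuousLinearMap.zero_apply] at h1
      have := congrArg Prod.snd h1
      simpa [hsnd', hAp, he, hinr'] using this.symm
    · funext t p
      ext y
      have h1 := hd (fun _ _ => 1) (fun _ _ => 0) (fun _ _ => 0) (fun _ _ => y)
        contDiff_const contDiff_const contDiff_const contDiff_const t p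
      simp only [fderiv_const_apply, ContinuousLinearMap.zero_apply, zero_add, map_zero,
        deriv_const', mul_zero, mul_one, one_mul, zero_mul, add_zero, zero_add,
        fderiv_const, Pi.zero_apply, one_smul, zero_smul, smul_zero,
        ContinuousLinearMap.comp_apply, ContinuousLinearMap.zero_apply] at h1
      have := congrArg Prod.snd h1
      simpa [hsnd', he, hinr'] using this.symm
    · funext t p
      ext x y
      have h1 := hd (fun _ _ => 0) (fun _ _ => 0) (fun _ _ => x) (fun _ _ => y)
        contDiff_const contDiff_const contDiff_const contDiff_const t p
      simp only [fderiv_const_apply, ContinuousLinearMap.zero_apply, zero_add, map_zero,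
        deriv_const', mul_zero, mul_one, one_mul, zero_mul, add_zero, zero_add,
        fderiv_const, Pi.zero_apply, one_smul, zero_smul, smul_zero,
        ContinuousLinearMap.comp_apply, ContinuousLinearMap.zero_apply] at h1
      have := congrArg Prod.snd h1
      simpa [hsnd', hΛ2, hPre, hinr'] using this.symm
end
end

section
/- Let ∇̇ = (∇, C, A, B) be a time-dependent covariant derivation operator on M, (t,p₀) ∈ ℝ × M, and v₀, w₀ ∈ T_{p₀}M. Construct: γ₁ the geodesic of ∇̇ with γ₁(t) = p₀, γ₁′(t) = v₀; set p₁ = γ₁(t+ε) and let v₁, w₁ be the ∇̇-parallel transports of v₀, w₀ along γ₁ to p₁; γ₂ the geodesic with γ₂(t+ε) = p₁, γ₂′(t+ε) = w₁; set p₂ = γ₂(t+2ε) and v₂, w₂ the parallel transports of v₁, w₁ to p₂; γ₃ the geodesic with γ₃(t+2ε) = p₂, γ₃′(t+2ε) = v₂; set p₃ = γ₃(t+ε) and w₃ the parallel transport of w₂ to p₃; γ₄ the geodesic with γ₄(t+ε) = p₃, γ₄′(t+ε) = w₃; and p₄ = γ₄(t). Then c(ε) = p₄ defines, for small ε, a smooth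 path with c(0) = p₀, c′(0) = 0, and, in coordinates, (1/2)c″(0) has components −(Γ^k_{ij} − Γ^k_{ji}) v^i w^j − (A^k_i − B^k_i)(v^i − w^i), all coefficients evaluated at (t, p₀). -/
/-!
STATEMENT 14 (geometric interpretation of the time-dependent torsion): the
four-step construction using geodesics and parallel transports of a
time-dependent covariant derivation operator `∇̇ = (∇, C, A, B)` produces a
path `c(ε)` with `c(0) = p₀`, `c'(0) = 0` and
`½ c''(0) = −(Γ^k_{ij} − Γ^k_{ji}) v^i w^j − (A^k_i − B^k_i)(v^i − w^i)`.

Model: `M` is a real normed space `E`; `∇` is encoded by its Christoffel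
operator `Γ : ℝ → E → E →L E →L E`.  A geodesic of `∇̇` satisfies
`γ̈ + Γ(γ̇,γ̇) + C + A(γ̇) + B(γ̇) = 0`, and a vector field `w` along `γ` is
parallel when `ẇ + Γ(γ̇,w) + C + A(γ̇) + B(w) = 0`.
-/

noncomputable section

open scoped Topology

variable {E : Type*} [NormedAddCommGroup E] [NormedSpace ℝ E]

/-- `γ` is a geodesic of the time-dependent covariant derivation operator
`∇̇ = (Γ, C, A, B)`: `∇̇_t γ' = ∇_t γ' + C + A(γ') + B(γ') = 0`. -/
def IsTDGeodesic (Γ : ℝ → E → E →L[ℝ] E →L[ℝ] E) (C : ℝ → E → E)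
    (A B : ℝ → E → E →L[ℝ] E) (γ : ℝ → E) : Prop :=
  ∀ s : ℝ,
    deriv (deriv γ) s + Γ s (γ s) (deriv γ s) (deriv γ s)
      + C s (γ s) + A s (γ s) (deriv γ s) + B s (γ s) (deriv γ s) = 0

/-- The vector field `w` along the path `γ` is parallel for the time-dependent
covariant derivation operator `∇̇ = (Γ, C, A, B)`:
`∇̇_t w = ∇_t w + C + A(γ') + B(w) = 0`. -/
def IsTDParallel (Γ : ℝ → E → E →L[ℝ] E →L[ℝ] E) (C : ℝ → E → E)
    (A B : ℝ → E → E →L[ℝ] E) (γ w : ℝ → E) : Prop :=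
  ∀ s : ℝ,
    deriv w s + Γ s (γ s) (deriv γ s) (w s)
      + C s (γ s) + A s (γ s) (deriv γ s) + B s (γ s) (w s) = 0

namespace TD14
variable {E : Type*} [NormedAddCommGroup E] [NormedSpace ℝ E]

/-- second-variable partial derivative -/
def pd2 (F : ℝ × ℝ → E) : ℝ × ℝ → E := fun q => fderiv ℝ F q (0, 1)

theorem pd2_contDiff {F : ℝ × ℝ → E} (hF : ContDiff ℝ (⊤ : ℕ∞) F) : ContDiff ℝ (⊤ : ℕ∞) (pd2 F) :=
  (hF.fderiv_right (by simp)).clm_apply contDiff_const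

theorem hasDerivAt_diag {F : ℝ × ℝ → E} (hF : ContDiff ℝ (⊤ : ℕ∞) F) (t k ε₀ : ℝ) :
    HasDerivAt (fun ε => F (ε, t + k * ε)) (fderiv ℝ F (ε₀, t + k * ε₀) (1, k)) ε₀ := by
  have hL : HasDerivAt (fun ε : ℝ => (ε, t + k * ε) : ℝ → ℝ × ℝ) (1, k) ε₀ :=
    (hasDerivAt_id ε₀).prodMk (by simpa using (((hasDerivAt_id ε₀).const_mul k).const_add t))
  exact ((hF.differentiable (by simp)).differentiableAt.hasFDerivAt.comp_hasDerivAt ε₀ hL)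

theorem hasDerivAt_slice {F : ℝ × ℝ → E} (hF : ContDiff ℝ (⊤ : ℕ∞) F) (ε s : ℝ) :
    HasDerivAt (fun s => F (ε, s)) (pd2 F (ε, s)) s := by
  have hL : HasDerivAt (fun s : ℝ => (ε, s) : ℝ → ℝ × ℝ) ((0 : ℝ), (1 : ℝ)) s :=
    (hasDerivAt_const s ε).prodMk (hasDerivAt_id s)
  exact ((hF.differentiable (by simp)).differentiableAt.hasFDerivAt.comp_hasDerivAt s hL)

theorem fderiv_apply_const {F : ℝ × ℝ → E} (hF : ContDiff ℝ (⊤ : ℕ∞) F) (q v w : ℝ × ℝ) :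
    fderiv ℝ (fun p => fderiv ℝ F p v) q w = fderiv ℝ (fderiv ℝ F) q w v := by
  rw [fderiv_clm_apply (((hF.fderiv_right (m := 1) (WithTop.coe_le_coe.mpr le_top)).differentiable one_ne_zero) q)
    (differentiableAt_const v)]
  simp

theorem deriv_diag {F : ℝ × ℝ → E} (hF : ContDiff ℝ (⊤ : ℕ∞) F) (t k : ℝ) :
    deriv (fun ε => F (ε, t + k * ε)) 0 = fderiv ℝ F (0, t) (1, k) := by
  have h := (hasDerivAt_diag hF t k 0).deriv
  simpa using h

theorem deriv2_diag {F : ℝ × ℝ → E} (hF : ContDiff ℝ (⊤ : ℕ∞) F) (t k : ℝ) :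
    deriv (deriv (fun ε => F (ε, t + k * ε))) 0
      = fderiv ℝ (fderiv ℝ F) (0, t) (1, k) (1, k) := by
  have h1 : deriv (fun ε => F (ε, t + k * ε)) = fun ε => fderiv ℝ F (ε, t + k * ε) (1, k) :=
    funext fun ε => (hasDerivAt_diag hF t k ε).deriv
  rw [h1]
  have hF' : ContDiff ℝ (⊤ : ℕ∞) (fun q : ℝ × ℝ => fderiv ℝ F q (1, k)) :=
    (hF.fderiv_right (by simp)).clm_apply contDiff_const
  have h2 : deriv (fun ε => fderiv ℝ F (ε, t + k * ε) (1, k)) 0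
      = fderiv ℝ (fun q : ℝ × ℝ => fderiv ℝ F q (1, k)) (0, t) (1, k) := by
    simpa using (hasDerivAt_diag hF' t k 0).deriv
  rw [h2]
  exact fderiv_apply_const hF _ _ _

theorem pd2_pd2_eq {F : ℝ × ℝ → E} (hF : ContDiff ℝ (⊤ : ℕ∞) F) (ε s : ℝ) :
    pd2 (pd2 F) (ε, s) = deriv (deriv (fun s => F (ε, s))) s := by
  have h1 : deriv (fun s => F (ε, s)) = fun s => pd2 F (ε, s) :=
    funext fun s => (hasDerivAt_slice hF ε s).deriv
  rw [h1]
  exact ((hasDerivAt_slice (pd2_contDiff hF) ε s).deriv).symm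

theorem shift1 (f : ℝ → E) (t : ℝ) : deriv (fun ε => f (t + ε)) 0 = deriv f t := by
  rw [deriv_comp_const_add, add_zero]

theorem shift2 (f : ℝ → E) (t : ℝ) :
    deriv (deriv (fun ε => f (t + ε))) 0 = deriv (deriv f) t := by
  have h : deriv (fun ε => f (t + ε)) = fun ε => deriv f (t + ε) :=
    funext fun x => deriv_comp_const_add f t x
  rw [h, deriv_comp_const_add, add_zero]

theorem curried_jet1 {F : ℝ → ℝ → E} (hF : ContDiff ℝ (⊤ : ℕ∞) fun q : ℝ × ℝ => F q.1 q.2)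
    (t k₀ k₁ : ℝ) :
    deriv (fun ε => F ε (t + k₁ * ε)) 0
      = deriv (fun ε => F ε (t + k₀ * ε)) 0 + (k₁ - k₀) • deriv (F 0) t := by
  have hv : deriv (F 0) t = fderiv ℝ (fun q : ℝ × ℝ => F q.1 q.2) (0, t) (0, 1) :=
    (hasDerivAt_slice hF 0 t).deriv
  have h1 : deriv (fun ε => F ε (t + k₁ * ε)) 0
      = fderiv ℝ (fun q : ℝ × ℝ => F q.1 q.2) (0, t) (1, k₁) := deriv_diag hF t k₁
  have h0 : deriv (fun ε => F ε (t + k₀ * ε)) 0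
      = fderiv ℝ (fun q : ℝ × ℝ => F q.1 q.2) (0, t) (1, k₀) := deriv_diag hF t k₀
  rw [h1, h0, hv]
  have e1 : ∀ k : ℝ, ((1 : ℝ), k) = ((1 : ℝ), (0 : ℝ)) + k • ((0 : ℝ), (1 : ℝ)) := by
    intro k; simp [Prod.ext_iff]
  rw [e1 k₁, e1 k₀]
  simp only [map_add, map_smul]
  module

theorem curried_jet2 {F : ℝ → ℝ → E} (hF : ContDiff ℝ (⊤ : ℕ∞) fun q : ℝ × ℝ => F q.1 q.2)
    (t k₀ k₁ : ℝ) :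
    deriv (deriv (fun ε => F ε (t + k₁ * ε))) 0
      = deriv (deriv (fun ε => F ε (t + k₀ * ε))) 0
        + (2 * (k₁ - k₀)) • deriv (fun ε => deriv (F ε) (t + k₀ * ε)) 0
        + ((k₁ - k₀) ^ 2) • deriv (deriv (F 0)) t := by
  set G : ℝ × ℝ → E := fun q : ℝ × ℝ => F q.1 q.2 with hGdef
  have h2a : deriv (deriv (fun ε => F ε (t + k₁ * ε))) 0
      = fderiv ℝ (fderiv ℝ G) (0, t) (1, k₁) (1, k₁) := deriv2_diag hF t k₁
  have h2b : deriv (deriv (fun ε => F ε (t + k₀ * ε))) 0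
      = fderiv ℝ (fderiv ℝ G) (0, t) (1, k₀) (1, k₀) := deriv2_diag hF t k₀
  have hm : deriv (fun ε => deriv (F ε) (t + k₀ * ε)) 0
      = fderiv ℝ (fderiv ℝ G) (0, t) (1, k₀) (0, 1) := by
    have e : (fun ε => deriv (F ε) (t + k₀ * ε)) = fun ε => pd2 G (ε, t + k₀ * ε) :=
      funext fun ε => (hasDerivAt_slice hF ε (t + k₀ * ε)).deriv
    rw [e, deriv_diag (pd2_contDiff hF) t k₀]
    exact fderiv_apply_const hF _ _ _
  have hc : deriv (deriv (F 0)) t = fderiv ℝ (fderiv ℝ G) (0, t) (0, 1) (0, 1) := by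
    have h := pd2_pd2_eq hF 0 t
    have h' : pd2 (pd2 G) (0, t) = fderiv ℝ (fderiv ℝ G) (0, t) (0, 1) (0, 1) :=
      fderiv_apply_const hF _ _ _
    exact h.symm.trans h'
  have hsymm : fderiv ℝ (fderiv ℝ G) (0, t) ((0 : ℝ), (1 : ℝ)) ((1 : ℝ), (0 : ℝ))
      = fderiv ℝ (fderiv ℝ G) (0, t) (1, 0) (0, 1) :=
    second_derivative_symmetric (fun y => ((hF.differentiable (by simp)) y).hasFDerivAt)
      ((((hF.fderiv_right (m := 1) (WithTop.coe_le_coe.mpr le_top)).differentiable one_ne_zero) (0, t)).hasFDerivAt) _ _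
  rw [h2a, h2b, hm, hc]
  have e1 : ∀ k : ℝ, ((1 : ℝ), k) = ((1 : ℝ), (0 : ℝ)) + k • ((0 : ℝ), (1 : ℝ)) := by
    intro k; simp [Prod.ext_iff]
  rw [e1 k₁, e1 k₀]
  simp only [map_add, map_smul, ContinuousLinearMap.add_apply, ContinuousLinearMap.smul_apply]
  rw [hsymm]
  module

end TD14

theorem td_torsion_four_step_construction
    (Γ : ℝ → E → E →L[ℝ] E →L[ℝ] E) (C : ℝ → E → E) (A B : ℝ → E → E →L[ℝ] E)
    (hΓ : ContDiff ℝ (⊤ : ℕ∞) fun q : ℝ × E => Γ q.1 q.2)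
    (hC : ContDiff ℝ (⊤ : ℕ∞) fun q : ℝ × E => C q.1 q.2)
    (hA : ContDiff ℝ (⊤ : ℕ∞) fun q : ℝ × E => A q.1 q.2)
    (hB : ContDiff ℝ (⊤ : ℕ∞) fun q : ℝ × E => B q.1 q.2)
    (t : ℝ) (p₀ v₀ w₀ : E)
    -- first geodesic, and the transports of v₀, w₀ along it
    (γ₁ V₁ W₁ : ℝ → E)
    (hγ₁s : ContDiff ℝ (⊤ : ℕ∞) γ₁) (hV₁s : ContDiff ℝ (⊤ : ℕ∞) V₁) (hW₁s : ContDiff ℝ (⊤ : ℕ∞) W₁)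
    (hγ₁ : IsTDGeodesic Γ C A B γ₁) (hγ₁0 : γ₁ t = p₀) (hγ₁v : deriv γ₁ t = v₀)
    (hV₁ : IsTDParallel Γ C A B γ₁ V₁) (hV₁0 : V₁ t = v₀)
    (hW₁ : IsTDParallel Γ C A B γ₁ W₁) (hW₁0 : W₁ t = w₀)
    -- second geodesic (depending on ε), and the transports along it
    (γ₂ V₂ W₂ : ℝ → ℝ → E)
    (hγ₂s : ContDiff ℝ (⊤ : ℕ∞) fun q : ℝ × ℝ => γ₂ q.1 q.2)
    (hV₂s : ContDiff ℝ (⊤ : ℕ∞) fun q : ℝ × ℝ => V₂ q.1 q.2)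
    (hW₂s : ContDiff ℝ (⊤ : ℕ∞) fun q : ℝ × ℝ => W₂ q.1 q.2)
    (hγ₂ : ∀ ε, IsTDGeodesic Γ C A B (γ₂ ε))
    (hγ₂0 : ∀ ε, γ₂ ε (t + ε) = γ₁ (t + ε))
    (hγ₂v : ∀ ε, deriv (γ₂ ε) (t + ε) = W₁ (t + ε))
    (hV₂ : ∀ ε, IsTDParallel Γ C A B (γ₂ ε) (V₂ ε))
    (hV₂0 : ∀ ε, V₂ ε (t + ε) = V₁ (t + ε))
    (hW₂ : ∀ ε, IsTDParallel Γ C A B (γ₂ ε) (W₂ ε))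
    (hW₂0 : ∀ ε, W₂ ε (t + ε) = W₁ (t + ε))
    -- third geodesic, and the transport of w along it
    (γ₃ W₃ : ℝ → ℝ → E)
    (hγ₃s : ContDiff ℝ (⊤ : ℕ∞) fun q : ℝ × ℝ => γ₃ q.1 q.2)
    (hW₃s : ContDiff ℝ (⊤ : ℕ∞) fun q : ℝ × ℝ => W₃ q.1 q.2)
    (hγ₃ : ∀ ε, IsTDGeodesic Γ C A B (γ₃ ε))
    (hγ₃0 : ∀ ε, γ₃ ε (t + 2 * ε) = γ₂ ε (t + 2 * ε))
    (hγ₃v : ∀ ε, deriv (γ₃ ε) (t + 2 * ε) = V₂ ε (t + 2 * ε))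
    (hW₃ : ∀ ε, IsTDParallel Γ C A B (γ₃ ε) (W₃ ε))
    (hW₃0 : ∀ ε, W₃ ε (t + 2 * ε) = W₂ ε (t + 2 * ε))
    -- fourth geodesic
    (γ₄ : ℝ → ℝ → E)
    (hγ₄s : ContDiff ℝ (⊤ : ℕ∞) fun q : ℝ × ℝ => γ₄ q.1 q.2)
    (hγ₄ : ∀ ε, IsTDGeodesic Γ C A B (γ₄ ε))
    (hγ₄0 : ∀ ε, γ₄ ε (t + ε) = γ₃ ε (t + ε))
    (hγ₄v : ∀ ε, deriv (γ₄ ε) (t + ε) = W₃ ε (t + ε))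
    -- the resulting path
    (c : ℝ → E) (hc : ∀ ε, c ε = γ₄ ε t) :
    c 0 = p₀ ∧ deriv c 0 = 0 ∧
      (1 / 2 : ℝ) • deriv (deriv c) 0
        = -(Γ t p₀ v₀ w₀ - Γ t p₀ w₀ v₀) - (A t p₀ - B t p₀) (v₀ - w₀) := by

  -- point values at ε = 0
  have hp2 : γ₂ 0 t = p₀ := by have h := hγ₂0 0; rw [add_zero] at h; rw [h, hγ₁0]
  have hd2 : deriv (γ₂ 0) t = w₀ := by have h := hγ₂v 0; rw [add_zero] at h; rw [h, hW₁0]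
  have hV20 : V₂ 0 t = v₀ := by have h := hV₂0 0; rw [add_zero] at h; rw [h, hV₁0]
  have hW20 : W₂ 0 t = w₀ := by have h := hW₂0 0; rw [add_zero] at h; rw [h, hW₁0]
  have hp3 : γ₃ 0 t = p₀ := by have h := hγ₃0 0; rw [mul_zero, add_zero] at h; rw [h, hp2]
  have hd3 : deriv (γ₃ 0) t = v₀ := by
    have h := hγ₃v 0; rw [mul_zero, add_zero] at h; rw [h, hV20]
  have hW30 : W₃ 0 t = w₀ := by have h := hW₃0 0; rw [mul_zero, add_zero] at h; rw [h, hW20]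
  have hp4 : γ₄ 0 t = p₀ := by have h := hγ₄0 0; rw [add_zero] at h; rw [h, hp3]
  have hd4 : deriv (γ₄ 0) t = w₀ := by have h := hγ₄v 0; rw [add_zero] at h; rw [h, hW30]
  -- values of second derivatives / derivatives of parallel fields from the ODEs at ε = 0, s = t
  have h_nv : deriv (deriv γ₁) t
      = -(Γ t p₀ v₀ v₀ + C t p₀ + A t p₀ v₀ + B t p₀ v₀) := by
    have h := hγ₁ t; rw [hγ₁0, hγ₁v] at h
    exact eq_neg_of_add_eq_zero_left (by rw [← h]; abel)
  have h_nw2 : deriv (deriv (γ₂ 0)) t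
      = -(Γ t p₀ w₀ w₀ + C t p₀ + A t p₀ w₀ + B t p₀ w₀) := by
    have h := hγ₂ 0 t; rw [hp2, hd2] at h
    exact eq_neg_of_add_eq_zero_left (by rw [← h]; abel)
  have h_nv3 : deriv (deriv (γ₃ 0)) t
      = -(Γ t p₀ v₀ v₀ + C t p₀ + A t p₀ v₀ + B t p₀ v₀) := by
    have h := hγ₃ 0 t; rw [hp3, hd3] at h
    exact eq_neg_of_add_eq_zero_left (by rw [← h]; abel)
  have h_nw4 : deriv (deriv (γ₄ 0)) t
      = -(Γ t p₀ w₀ w₀ + C t p₀ + A t p₀ w₀ + B t p₀ w₀) := by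
    have h := hγ₄ 0 t; rw [hp4, hd4] at h
    exact eq_neg_of_add_eq_zero_left (by rw [← h]; abel)
  have h_pv : deriv V₁ t
      = -(Γ t p₀ v₀ v₀ + C t p₀ + A t p₀ v₀ + B t p₀ v₀) := by
    have h := hV₁ t; rw [hγ₁0, hγ₁v, hV₁0] at h
    exact eq_neg_of_add_eq_zero_left (by rw [← h]; abel)
  have h_pw : deriv W₁ t
      = -(Γ t p₀ v₀ w₀ + C t p₀ + A t p₀ v₀ + B t p₀ w₀) := by
    have h := hW₁ t; rw [hγ₁0, hγ₁v, hW₁0] at h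
    exact eq_neg_of_add_eq_zero_left (by rw [← h]; abel)
  have h_qv : deriv (V₂ 0) t
      = -(Γ t p₀ w₀ v₀ + C t p₀ + A t p₀ w₀ + B t p₀ v₀) := by
    have h := hV₂ 0 t; rw [hp2, hd2, hV20] at h
    exact eq_neg_of_add_eq_zero_left (by rw [← h]; abel)
  have h_qw : deriv (W₂ 0) t
      = -(Γ t p₀ w₀ w₀ + C t p₀ + A t p₀ w₀ + B t p₀ w₀) := by
    have h := hW₂ 0 t; rw [hp2, hd2, hW20] at h
    exact eq_neg_of_add_eq_zero_left (by rw [← h]; abel)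
  have h_pw3 : deriv (W₃ 0) t
      = -(Γ t p₀ v₀ w₀ + C t p₀ + A t p₀ v₀ + B t p₀ w₀) := by
    have h := hW₃ 0 t; rw [hp3, hd3, hW30] at h
    exact eq_neg_of_add_eq_zero_left (by rw [← h]; abel)
  -- γ₂ at anchor k = 1
  have e21 : (fun ε => γ₂ ε (t + 1 * ε)) = fun ε => γ₁ (t + ε) :=
    funext fun ε => by rw [one_mul]; exact hγ₂0 ε
  have e21v : (fun ε => deriv (γ₂ ε) (t + 1 * ε)) = fun ε => W₁ (t + ε) :=
    funext fun ε => by rw [one_mul]; exact hγ₂v ε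
  have d1_21 : deriv (fun ε => γ₂ ε (t + 1 * ε)) 0 = v₀ := by
    rw [e21, TD14.shift1, hγ₁v]
  have d2_21 : deriv (deriv (fun ε => γ₂ ε (t + 1 * ε))) 0
      = -(Γ t p₀ v₀ v₀ + C t p₀ + A t p₀ v₀ + B t p₀ v₀) := by
    rw [e21, TD14.shift2, h_nv]
  have dp_21 : deriv (fun ε => deriv (γ₂ ε) (t + 1 * ε)) 0
      = -(Γ t p₀ v₀ w₀ + C t p₀ + A t p₀ v₀ + B t p₀ w₀) := by
    rw [e21v, TD14.shift1, h_pw]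
  -- γ₂ at anchor k = 2
  have d1_22 : deriv (fun ε => γ₂ ε (t + 2 * ε)) 0 = v₀ + w₀ := by
    rw [TD14.curried_jet1 hγ₂s t 1 2, d1_21, hd2]; module
  have d2_22 : deriv (deriv (fun ε => γ₂ ε (t + 2 * ε))) 0
      = -(Γ t p₀ v₀ v₀ + C t p₀ + A t p₀ v₀ + B t p₀ v₀)
        + (2 : ℝ) • -(Γ t p₀ v₀ w₀ + C t p₀ + A t p₀ v₀ + B t p₀ w₀)
        + -(Γ t p₀ w₀ w₀ + C t p₀ + A t p₀ w₀ + B t p₀ w₀) := by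
    rw [TD14.curried_jet2 hγ₂s t 1 2, d2_21, dp_21, h_nw2]; module
  -- V₂, W₂ at anchors 1 and 2
  have eV1 : (fun ε => V₂ ε (t + 1 * ε)) = fun ε => V₁ (t + ε) :=
    funext fun ε => by rw [one_mul]; exact hV₂0 ε
  have d1V_1 : deriv (fun ε => V₂ ε (t + 1 * ε)) 0
      = -(Γ t p₀ v₀ v₀ + C t p₀ + A t p₀ v₀ + B t p₀ v₀) := by
    rw [eV1, TD14.shift1, h_pv]
  have d1V_2 : deriv (fun ε => V₂ ε (t + 2 * ε)) 0
      = -(Γ t p₀ v₀ v₀ + C t p₀ + A t p₀ v₀ + B t p₀ v₀)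
        + -(Γ t p₀ w₀ v₀ + C t p₀ + A t p₀ w₀ + B t p₀ v₀) := by
    rw [TD14.curried_jet1 hV₂s t 1 2, d1V_1, h_qv]; module
  have eW1 : (fun ε => W₂ ε (t + 1 * ε)) = fun ε => W₁ (t + ε) :=
    funext fun ε => by rw [one_mul]; exact hW₂0 ε
  have d1W_1 : deriv (fun ε => W₂ ε (t + 1 * ε)) 0
      = -(Γ t p₀ v₀ w₀ + C t p₀ + A t p₀ v₀ + B t p₀ w₀) := by
    rw [eW1, TD14.shift1, h_pw]
  have d1W_2 : deriv (fun ε => W₂ ε (t + 2 * ε)) 0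
      = -(Γ t p₀ v₀ w₀ + C t p₀ + A t p₀ v₀ + B t p₀ w₀)
        + -(Γ t p₀ w₀ w₀ + C t p₀ + A t p₀ w₀ + B t p₀ w₀) := by
    rw [TD14.curried_jet1 hW₂s t 1 2, d1W_1, h_qw]; module
  -- γ₃ at anchor k = 2 then k = 1
  have e32 : (fun ε => γ₃ ε (t + 2 * ε)) = fun ε => γ₂ ε (t + 2 * ε) :=
    funext fun ε => hγ₃0 ε
  have e32v : (fun ε => deriv (γ₃ ε) (t + 2 * ε)) = fun ε => V₂ ε (t + 2 * ε) :=
    funext fun ε => hγ₃v ε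
  have d1_32 : deriv (fun ε => γ₃ ε (t + 2 * ε)) 0 = v₀ + w₀ := by rw [e32]; exact d1_22
  have d2_32 : deriv (deriv (fun ε => γ₃ ε (t + 2 * ε))) 0
      = -(Γ t p₀ v₀ v₀ + C t p₀ + A t p₀ v₀ + B t p₀ v₀)
        + (2 : ℝ) • -(Γ t p₀ v₀ w₀ + C t p₀ + A t p₀ v₀ + B t p₀ w₀)
        + -(Γ t p₀ w₀ w₀ + C t p₀ + A t p₀ w₀ + B t p₀ w₀) := by
    rw [e32]; exact d2_22
  have dp_32 : deriv (fun ε => deriv (γ₃ ε) (t + 2 * ε)) 0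
      = -(Γ t p₀ v₀ v₀ + C t p₀ + A t p₀ v₀ + B t p₀ v₀)
        + -(Γ t p₀ w₀ v₀ + C t p₀ + A t p₀ w₀ + B t p₀ v₀) := by
    rw [e32v]; exact d1V_2
  have d1_31 : deriv (fun ε => γ₃ ε (t + 1 * ε)) 0 = w₀ := by
    rw [TD14.curried_jet1 hγ₃s t 2 1, d1_32, hd3]; module
  have d2_31 : deriv (deriv (fun ε => γ₃ ε (t + 1 * ε))) 0
      = (2 : ℝ) • -(Γ t p₀ v₀ w₀ + C t p₀ + A t p₀ v₀ + B t p₀ w₀)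
        + -(Γ t p₀ w₀ w₀ + C t p₀ + A t p₀ w₀ + B t p₀ w₀)
        - (2 : ℝ) • -(Γ t p₀ w₀ v₀ + C t p₀ + A t p₀ w₀ + B t p₀ v₀) := by
    rw [TD14.curried_jet2 hγ₃s t 2 1, d2_32, dp_32, h_nv3]; module
  -- W₃ at anchors 2 and 1
  have eW3 : (fun ε => W₃ ε (t + 2 * ε)) = fun ε => W₂ ε (t + 2 * ε) :=
    funext fun ε => hW₃0 ε
  have d1W3_2 : deriv (fun ε => W₃ ε (t + 2 * ε)) 0
      = -(Γ t p₀ v₀ w₀ + C t p₀ + A t p₀ v₀ + B t p₀ w₀)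
        + -(Γ t p₀ w₀ w₀ + C t p₀ + A t p₀ w₀ + B t p₀ w₀) := by
    rw [eW3]; exact d1W_2
  have d1W3_1 : deriv (fun ε => W₃ ε (t + 1 * ε)) 0
      = -(Γ t p₀ w₀ w₀ + C t p₀ + A t p₀ w₀ + B t p₀ w₀) := by
    rw [TD14.curried_jet1 hW₃s t 2 1, d1W3_2, h_pw3]; module
  -- γ₄ at anchor k = 1 then k = 0
  have e43 : (fun ε => γ₄ ε (t + 1 * ε)) = fun ε => γ₃ ε (t + 1 * ε) :=
    funext fun ε => by rw [one_mul]; exact hγ₄0 ε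
  have e43v : (fun ε => deriv (γ₄ ε) (t + 1 * ε)) = fun ε => W₃ ε (t + 1 * ε) :=
    funext fun ε => by rw [one_mul]; exact hγ₄v ε
  have d1_41 : deriv (fun ε => γ₄ ε (t + 1 * ε)) 0 = w₀ := by rw [e43]; exact d1_31
  have d2_41 : deriv (deriv (fun ε => γ₄ ε (t + 1 * ε))) 0
      = (2 : ℝ) • -(Γ t p₀ v₀ w₀ + C t p₀ + A t p₀ v₀ + B t p₀ w₀)
        + -(Γ t p₀ w₀ w₀ + C t p₀ + A t p₀ w₀ + B t p₀ w₀)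
        - (2 : ℝ) • -(Γ t p₀ w₀ v₀ + C t p₀ + A t p₀ w₀ + B t p₀ v₀) := by
    rw [e43]; exact d2_31
  have dp_41 : deriv (fun ε => deriv (γ₄ ε) (t + 1 * ε)) 0
      = -(Γ t p₀ w₀ w₀ + C t p₀ + A t p₀ w₀ + B t p₀ w₀) := by
    rw [e43v]; exact d1W3_1
  have d1_40 : deriv (fun ε => γ₄ ε (t + 0 * ε)) 0 = 0 := by
    rw [TD14.curried_jet1 hγ₄s t 1 0, d1_41, hd4]; module
  have d2_40 : deriv (deriv (fun ε => γ₄ ε (t + 0 * ε))) 0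
      = (2 : ℝ) • -(Γ t p₀ v₀ w₀ + C t p₀ + A t p₀ v₀ + B t p₀ w₀)
        - (2 : ℝ) • -(Γ t p₀ w₀ v₀ + C t p₀ + A t p₀ w₀ + B t p₀ v₀) := by
    rw [TD14.curried_jet2 hγ₄s t 1 0, d2_41, dp_41, h_nw4]; module
  -- conclusion
  have ec : c = fun ε => γ₄ ε (t + 0 * ε) :=
    funext fun ε => by rw [zero_mul, add_zero]; exact hc ε
  refine ⟨by rw [hc 0, hp4], ?_, ?_⟩
  · rw [ec]; exact d1_40
  · rw [ec, d2_40]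
    simp only [ContinuousLinearMap.sub_apply, map_sub]
    module
end
end

section
/- Let ∇̇ = (∇, C, A, B) be a time-dependent covariant derivation operator on M, and let X, Y be time-dependent vector fields on M with suspensions X̃ = ∂/∂t + X and Ỹ = ∂/∂t + Y on ℝ × M. Let ∇̂ be any connection on ℝ × M that extends ∇̇ (in the sense of the decomposition ∇̂ ↔ (λ, α, β, ε, C, A, B, ∇)), and let T^∇̂ be its torsion tensor. Then the time-dependent torsion operator 𝒯^∇̇(X,Y) = T^∇(X,Y) + (A − B)(X − Y) satisfies 𝒯^∇̇(X,Y) = Tρ₂ ∘ T^∇̂(X̃, Ỹ); more precisely, T^∇̂(X̃,Ỹ) = ( (α−β)(X−Y) + ε(X,Y) − ε(Y,X) ) ∂/∂t + T^∇(X,Y) + (A−B)(X−Y). -/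
/-!
STATEMENT 15: for a time-dependent covariant derivation operator
`∇̇ = (∇, C, A, B)` on `M` and any connection `∇̂` on `ℝ × M` extending it
(with decomposition data `(λ, α, β, ε, C, A, B, ∇)`), the torsion of `∇̂` on the
suspensions `X̃ = ∂/∂t + X`, `Ỹ = ∂/∂t + Y` is
`T^∇̂(X̃,Ỹ) = ((α−β)(X−Y) + ε(X,Y) − ε(Y,X)) ∂/∂t + T^∇(X,Y) + (A−B)(X−Y)`;
in particular the time-dependent torsion operator
`𝒯^∇̇(X,Y) = T^∇(X,Y) + (A−B)(X−Y)` equals `Tρ₂ ∘ T^∇̂(X̃,Ỹ)`.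

Model: `M` is a real normed space `E`; `∇̂` on `ℝ × E` is encoded by its
Christoffel operator `Γh`, with `hExt` expressing that its decomposition has the
given data; the torsion is
`T^∇̂(V,W) = ∇̂_V W − ∇̂_W V − [V,W]`, written out with Fréchet derivatives, and
similarly `T^∇(X,Y) = ∇_X Y − ∇_Y X − [X,Y]` at frozen time.
-/

noncomputable section

open scoped Topology

theorem td_torsion_from_extension
    {E : Type*} [NormedAddCommGroup E] [NormedSpace ℝ E]
    (Γ : ℝ → E → E →L[ℝ] E →L[ℝ] E) (C : ℝ → E → E) (A B : ℝ → E → E →L[ℝ] E)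
    (lam : ℝ → E → ℝ) (alpha beta : ℝ → E → E →L[ℝ] ℝ)
    (eps : ℝ → E → E →L[ℝ] E →L[ℝ] ℝ)
    -- a connection on ℝ × M whose decomposition extends ∇̇ = (∇, C, A, B)
    (Γh : ℝ × E → (ℝ × E) →L[ℝ] (ℝ × E) →L[ℝ] (ℝ × E))
    (hExt : ∀ (t : ℝ) (x : E) (u v : ℝ × E),
      Γh (t, x) u v
        = (lam t x * (u.1 * v.1) + alpha t x u.2 * v.1 + beta t x v.2 * u.1
             + eps t x u.2 v.2,
           (u.1 * v.1) • C t x + v.1 • A t x u.2 + u.1 • B t x v.2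
             + Γ t x u.2 v.2))
    (X Y : ℝ → E → E)
    (hX : ContDiff ℝ (⊤ : ℕ∞) fun q : ℝ × E => X q.1 q.2)
    (hY : ContDiff ℝ (⊤ : ℕ∞) fun q : ℝ × E => Y q.1 q.2)
    (t : ℝ) (p : E) :
    -- T^∇̂(X̃, Ỹ) = ∇̂_X̃ Ỹ − ∇̂_Ỹ X̃ − [X̃, Ỹ] at (t,p) …
    ((fderiv ℝ (fun q : ℝ × E => ((1 : ℝ), Y q.1 q.2)) (t, p) (1, X t p)
          + Γh (t, p) (1, X t p) (1, Y t p))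
        - (fderiv ℝ (fun q : ℝ × E => ((1 : ℝ), X q.1 q.2)) (t, p) (1, Y t p)
          + Γh (t, p) (1, Y t p) (1, X t p))
        - (fderiv ℝ (fun q : ℝ × E => ((1 : ℝ), Y q.1 q.2)) (t, p) (1, X t p)
          - fderiv ℝ (fun q : ℝ × E => ((1 : ℝ), X q.1 q.2)) (t, p) (1, Y t p)))
      -- … equals ((α−β)(X−Y) + ε(X,Y) − ε(Y,X)) ∂/∂t + T^∇(X,Y) + (A−B)(X−Y),
      -- whose second (vertical) component is the time-dependent torsion
      -- operator 𝒯^∇̇(X,Y) = T^∇(X,Y) + (A−B)(X−Y)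
      = ((alpha t p (X t p - Y t p) - beta t p (X t p - Y t p))
            + (eps t p (X t p) (Y t p) - eps t p (Y t p) (X t p)),
         ((fderiv ℝ (Y t) p (X t p) + Γ t p (X t p) (Y t p))
              - (fderiv ℝ (X t) p (Y t p) + Γ t p (Y t p) (X t p))
              - (fderiv ℝ (Y t) p (X t p) - fderiv ℝ (X t) p (Y t p)))
            + (A t p - B t p) (X t p - Y t p)) := by
  have h1 := hExt t p (1, X t p) (1, Y t p)
  have h2 := hExt t p (1, Y t p) (1, X t p)
  set a := fderiv ℝ (fun q : ℝ × E => ((1 : ℝ), Y q.1 q.2)) (t, p) (1, X t p)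
  set b := fderiv ℝ (fun q : ℝ × E => ((1 : ℝ), X q.1 q.2)) (t, p) (1, Y t p)
  have key : a + Γh (t,p) (1, X t p) (1, Y t p)
      - (b + Γh (t,p) (1, Y t p) (1, X t p)) - (a - b)
      = Γh (t,p) (1, X t p) (1, Y t p) - Γh (t,p) (1, Y t p) (1, X t p) := by
    abel
  rw [key, h1, h2, Prod.mk_sub_mk, Prod.mk.injEq]
  constructor
  · simp [map_sub]; ring
  · simp [map_sub, ContinuousLinearMap.sub_apply]; abel
end
end
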